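/- arXiv:1309.1625 — 9 statements merged into one kernel-verified Lean document; each statement's English description precedes it below -/
import Mathlib

section
/- Let s = (s_0, ..., s_{N-1}) be a sequence of integers of period N, let P_s(x) = \sum_{i=0}^{N-1} s_i x^i in Z[x], and let A be the N×N circulant matrix with entries a_{i,j} = s_{(i-j) mod N}. If det(A) ≠ 0 (over Q), then there exist polynomials u(x), v(x) in Z[x] with deg u ≤ N-1 and deg v ≤ N-2 such that u(x)·P_s(x) + v(x)·(1 - x^N) = det(A). -/
/-!
Let `a` be the first column of `adj A`, so that `A a = det A • e₀`. Reading vectors indexed by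
`ZMod N` as polynomials of degree `< N`, the product by the circulant matrix of `s` is cyclic
convolution with `s`, i.e. multiplication by `P_s` modulo `X ^ N - 1`. Hence the polynomial `u` of
`a` satisfies `u P_s ≡ det A [mod X ^ N - 1]`, and since `u P_s - det A` has degree at most
`2N - 2`, the cofactor `v` has degree at most `N - 2`.
-/

open Polynomial Matrix

namespace ZMod

variable {N : ℕ} [NeZero N]

lemma sum_val_eq_sum_range {M : Type*} [AddCommMonoid M] (f : ℕ → M) :
    ∑ k : ZMod N, f k.val = ∑ i ∈ Finset.range N, f i :=
  Finset.sum_nbij' val (fun i => (i : ZMod N)) (fun k _ => Finset.mem_range.2 k.val_lt)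
    (fun _ _ => Finset.mem_univ _) (fun k _ => natCast_zmod_val k)
    (fun _ hi => val_cast_of_lt (Finset.mem_range.1 hi)) (fun _ _ => rfl)

lemma pow_val_add {M : Type*} [Monoid M] {ω : M} (hω : ω ^ N = 1) (i j : ZMod N) :
    ω ^ (i + j).val = ω ^ i.val * ω ^ j.val := by
  rw [val_add, ← pow_eq_pow_mod _ hω, pow_add]

end ZMod

section CyclicPoly

variable {R : Type*} [CommRing R] {N : ℕ} [NeZero N]

noncomputable def cyclicPoly (g : ZMod N → R) : R[X] :=
  ∑ k, C (g k) * X ^ k.val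

lemma cyclicPoly_eq_sum_range (g : ZMod N → R) :
    cyclicPoly g = ∑ i ∈ Finset.range N, C (g i) * X ^ i := by
  simp_rw [cyclicPoly, ← ZMod.sum_val_eq_sum_range (fun i => C (g i) * X ^ i), ZMod.natCast_zmod_val]

lemma natDegree_cyclicPoly_le (g : ZMod N → R) : (cyclicPoly g).natDegree ≤ N - 1 :=
  natDegree_sum_le_of_forall_le _ _ fun k _ =>
    (natDegree_C_mul_X_pow_le _ _).trans (Nat.le_sub_one_of_lt k.val_lt)

lemma cyclicPoly_single_zero (r : R) : cyclicPoly (Pi.single 0 r : ZMod N → R) = C r := by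
  rw [cyclicPoly, Fintype.sum_eq_single 0 fun k hk => by simp [hk]]
  simp

lemma aeval_cyclicPoly {S : Type*} [CommRing S] [Algebra R S] (ω : S) (g : ZMod N → R) :
    aeval ω (cyclicPoly g) = ∑ k, algebraMap R S (g k) * ω ^ k.val := by
  simp [cyclicPoly]

lemma aeval_cyclicPoly_circulant_mulVec {S : Type*} [CommRing S] [Algebra R S] {ω : S}
    (hω : ω ^ N = 1) (s a : ZMod N → R) :
    aeval ω (cyclicPoly (circulant s *ᵥ a)) = aeval ω (cyclicPoly s) * aeval ω (cyclicPoly a) := by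
  simp only [aeval_cyclicPoly, mulVec, dotProduct, circulant_apply, map_sum, map_mul,
    Finset.sum_mul, Finset.mul_sum]
  rw [Finset.sum_comm]
  refine Finset.sum_congr rfl fun k _ => (Fintype.sum_equiv (Equiv.addRight k) _ _ fun j => ?_).symm
  rw [Equiv.coe_addRight, add_sub_cancel_right, ZMod.pow_val_add hω]
  ring

theorem X_pow_sub_one_dvd_cyclicPoly_mul_sub (s a : ZMod N → R) :
    X ^ N - 1 ∣ cyclicPoly s * cyclicPoly a - cyclicPoly (circulant s *ᵥ a) := by
  have hroot : AdjoinRoot.root (X ^ N - 1 : R[X]) ^ N = 1 := by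
    have := AdjoinRoot.eval₂_root (X ^ N - 1 : R[X])
    rwa [eval₂_sub, eval₂_X_pow, eval₂_one, sub_eq_zero] at this
  rw [← AdjoinRoot.mk_eq_zero, map_sub, map_mul, ← AdjoinRoot.aeval_eq, ← AdjoinRoot.aeval_eq,
    ← AdjoinRoot.aeval_eq, aeval_cyclicPoly_circulant_mulVec hroot, sub_self]

end CyclicPoly

lemma Polynomial.Monic.natDegree_le_sub_of_mul_le {R : Type*} [Semiring R] {f v : R[X]} {n : ℕ}
    (hf : f.Monic) (h : (f * v).natDegree ≤ n) : v.natDegree ≤ n - f.natDegree := by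
  rcases eq_or_ne v 0 with rfl | hv
  · simp
  · rw [hf.natDegree_mul' hv] at h
    omega

lemma Matrix.mulVec_adjugate_mulVec_single {n R : Type*} [Fintype n] [DecidableEq n] [CommRing R]
    (A : Matrix n n R) (i : n) :
    A *ᵥ (A.adjugate *ᵥ Pi.single i 1) = Pi.single i A.det := by
  rw [mulVec_mulVec, mul_adjugate, smul_mulVec, one_mulVec]
  ext j
  simp [Pi.single_apply]

theorem stmt0_general (N : ℕ) [NeZero N] (s : ZMod N → ℤ) :
    ∃ u v : ℤ[X], u.natDegree ≤ N - 1 ∧ v.natDegree ≤ N - 2 ∧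
      u * (∑ i ∈ Finset.range N, C (s (i : ZMod N)) * X ^ i) + v * (1 - X ^ N) =
        C (Matrix.circulant s).det := by
  set a := (circulant s).adjugate *ᵥ Pi.single 0 1
  obtain ⟨v, hv⟩ := X_pow_sub_one_dvd_cyclicPoly_mul_sub s a
  rw [mulVec_adjugate_mulVec_single, cyclicPoly_single_zero] at hv
  rw [← cyclicPoly_eq_sum_range]
  refine ⟨cyclicPoly a, v, natDegree_cyclicPoly_le a, ?_, by linear_combination hv⟩
  have hdeg : ((X ^ N - 1) * v).natDegree ≤ 2 * N - 2 := by
    rw [← hv]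
    refine (natDegree_sub_le _ _).trans (max_le (natDegree_mul_le.trans ?_) (by simp))
    have hu := natDegree_cyclicPoly_le a
    have hs := natDegree_cyclicPoly_le s
    omega
  have hmonic : (X ^ N - 1 : ℤ[X]).Monic := by simpa using monic_X_pow_sub_C (1 : ℤ) (NeZero.ne N)
  have hdegf : (X ^ N - 1 : ℤ[X]).natDegree = N := by
    simpa using natDegree_X_pow_sub_C (n := N) (r := (1 : ℤ))
  have hv_le := hmonic.natDegree_le_sub_of_mul_le hdeg
  omega

theorem stmt0 (N : ℕ) [NeZero N] (s : ZMod N → ℤ)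
    (hdet : (Matrix.circulant fun i : ZMod N => (s i : ℚ)).det ≠ 0) :
    ∃ u v : ℤ[X], u.natDegree ≤ N - 1 ∧ v.natDegree ≤ N - 2 ∧
      u * (∑ i ∈ Finset.range N, C (s (i : ZMod N)) * X ^ i) + v * (1 - X ^ N) =
        C (Matrix.circulant s).det :=
  stmt0_general N s
end

section
/- Let s be a binary sequence of period N with sequence polynomial P_s(x) = \sum_{i=0}^{N-1} s_i x^i ∈ Z[x], and let A be the N×N circulant matrix a_{i,j} = s_{(i-j) mod N}. If gcd(1 - 2^N, det(A)) = 1, then gcd(P_s(2), 2^N - 1) = 1. -/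
/-!
Reduce modulo `n = 2 ^ N - 1`, where `2 ^ N = 1`. For any `x` with `x ^ N = 1` the vector
`(x ^ (-j))_j` is an eigenvector of the circulant matrix of `s` with eigenvalue `∑ₖ sₖ xᵏ`, and its
`0`-th entry is `1`; hence the eigenvalue divides the determinant. For `x = 2` this says that
`P_s(2)` divides `det A` modulo `2 ^ N - 1`, so `gcd(P_s(2), 2 ^ N - 1)` divides both `det A` and
`1 - 2 ^ N`.
-/

open Matrix

theorem Matrix.dvd_det_of_mulVec_eq_smul {n R : Type*} [Fintype n] [DecidableEq n] [CommRing R]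
    {A : Matrix n n R} {v : n → R} {μ : R} (hv : A *ᵥ v = μ • v) (i : n) (hvi : v i = 1) :
    μ ∣ A.det := by
  have h : A.det • v = μ • (A.adjugate *ᵥ v) := by
    rw [← mulVec_smul, ← hv, mulVec_mulVec, adjugate_mul, smul_mulVec, one_mulVec]
  refine ⟨(A.adjugate *ᵥ v) i, ?_⟩
  simpa [hvi] using congrFun h i

theorem ZMod.sum_range_eq_sum_val {N : ℕ} [NeZero N] {M : Type*} [AddCommMonoid M] (f : ℕ → M) :
    ∑ i ∈ Finset.range N, f i = ∑ k : ZMod N, f k.val := by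
  refine Finset.sum_nbij' (fun i ↦ (i : ZMod N)) ZMod.val (fun _ _ ↦ Finset.mem_univ _)
    (fun k _ ↦ Finset.mem_range.mpr (ZMod.val_lt k)) (fun i hi ↦ ?_)
    (fun k _ ↦ ZMod.natCast_zmod_val k) (fun i hi ↦ ?_)
  all_goals rw [ZMod.val_natCast_of_lt (Finset.mem_range.mp hi)]

theorem Int.gcd_dvd_of_intCast_dvd {n : ℕ} {a b : ℤ} (h : (a : ZMod n) ∣ (b : ZMod n)) :
    (Int.gcd a n : ℤ) ∣ b := by
  obtain ⟨c, hc⟩ := h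
  obtain ⟨c, rfl⟩ := ZMod.intCast_surjective c
  rw [← Int.cast_mul, ZMod.intCast_eq_intCast_iff_dvd_sub] at hc
  have := dvd_sub ((Int.gcd_dvd_left a n).mul_right c) ((Int.gcd_dvd_right a n).trans hc)
  rwa [sub_sub_cancel] at this

section Circulant

variable {N : ℕ} [NeZero N]

theorem pow_val_add_of_pow_eq_one {M : Type*} [Monoid M] {x : M} (hx : x ^ N = 1)
    (a b : ZMod N) : x ^ (a + b).val = x ^ a.val * x ^ b.val := by
  rw [ZMod.val_add, ← pow_eq_pow_mod _ hx, pow_add]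

variable {R : Type*} [CommRing R] {x : R}

theorem Matrix.circulant_mulVec_pow_val_neg (c : ZMod N → R) (hx : x ^ N = 1) :
    circulant c *ᵥ (fun j ↦ x ^ (-j).val) = (∑ k, c k * x ^ k.val) • fun j ↦ x ^ (-j).val := by
  funext i
  have hsplit : ∀ j : ZMod N, x ^ (-j).val = x ^ (i - j).val * x ^ (-i).val := fun j ↦ by
    rw [← pow_val_add_of_pow_eq_one hx]; ring_nf
  calc ∑ j, c (i - j) * x ^ (-j).val
      = (∑ j, c (i - j) * x ^ (i - j).val) * x ^ (-i).val := by
        rw [Finset.sum_mul]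
        exact Finset.sum_congr rfl fun j _ ↦ by rw [hsplit j, mul_assoc]
    _ = (∑ k, c k * x ^ k.val) * x ^ (-i).val := by
        rw [Fintype.sum_equiv (Equiv.subLeft i) (fun j ↦ c (i - j) * x ^ (i - j).val)
          (fun k ↦ c k * x ^ k.val) fun _ ↦ rfl]

theorem Matrix.sum_mul_pow_val_dvd_det_circulant (c : ZMod N → R) (hx : x ^ N = 1) :
    (∑ k, c k * x ^ k.val) ∣ (circulant c).det :=
  dvd_det_of_mulVec_eq_smul (circulant_mulVec_pow_val_neg c hx) 0 (by simp)

end Circulant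

theorem stmt1_general (N : ℕ) [NeZero N] (s : ZMod N → ℤ)
    (hgcd : Int.gcd (1 - 2 ^ N) (Matrix.circulant s).det = 1) :
    Int.gcd (∑ i ∈ Finset.range N, s (i : ZMod N) * 2 ^ i) (2 ^ N - 1) = 1 := by
  set P := ∑ i ∈ Finset.range N, s (i : ZMod N) * 2 ^ i
  have hn : ((2 ^ N - 1 : ℕ) : ℤ) = 2 ^ N - 1 := by
    rw [Nat.cast_sub Nat.one_le_two_pow]; push_cast; rfl
  have h2 : (2 : ZMod (2 ^ N - 1)) ^ N = 1 := by
    have h := ZMod.natCast_self (2 ^ N - 1)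
    rwa [Nat.cast_sub Nat.one_le_two_pow, sub_eq_zero, Nat.cast_pow, Nat.cast_ofNat,
      Nat.cast_one] at h
  have hP_dvd_det : (P : ZMod (2 ^ N - 1)) ∣ ((circulant s).det : ZMod (2 ^ N - 1)) := by
    rw [Int.cast_det, map_circulant]
    push_cast [P]
    rw [ZMod.sum_range_eq_sum_val]
    simpa only [ZMod.natCast_zmod_val] using sum_mul_pow_val_dvd_det_circulant _ h2
  have hg_det : (Int.gcd P (2 ^ N - 1) : ℤ) ∣ (circulant s).det := by
    simpa only [hn] using Int.gcd_dvd_of_intCast_dvd hP_dvd_det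
  have hg_sub : (Int.gcd P (2 ^ N - 1) : ℤ) ∣ 1 - 2 ^ N :=
    dvd_sub_comm.mp (Int.gcd_dvd_right _ _)
  exact Nat.dvd_one.mp (hgcd ▸ Int.dvd_gcd hg_sub hg_det)

theorem stmt1 (N : ℕ) [NeZero N] (s : ZMod N → ℤ)
    (hbin : ∀ i, s i = 0 ∨ s i = 1)
    (hgcd : Int.gcd (1 - 2 ^ N) (Matrix.circulant s).det = 1) :
    Int.gcd (∑ i ∈ Finset.range N, s (i : ZMod N) * 2 ^ i) (2 ^ N - 1) = 1 :=
  stmt1_general N s hgcd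
end

section
/- Let p ≡ 1 (mod 4) be a prime and let s be the Legendre sequence of period p (s_i = 1 iff i is a nonzero quadratic residue mod p). Let A be the circulant matrix of s. Then det(A) = ±((p-1)/2)·((p-1)/4)^{(p-1)/2}. -/
/-!
Write `A` for the circulant of `s` over the field `F` with `q = #F`, `J` for the all-ones matrix
and `C` for the circulant of the quadratic character `χ`. Then `2A = J + C - 1` and `CJ = JC = 0`;
since `χ (-1) = 1` for `q ≡ 1 mod 4`, the Jacobi sum `J(χ, χ) = -1` gives `C² = q - J`. Expanding
yields `A (J - 1 - A) = (q - 1)/4 • (J - 1)`. The complement `J - 1 - A` is `A` with rows and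
columns permuted by `x ↦ g x` for a nonsquare `g`, so `det A ^ 2 = ((q - 1)/4) ^ q * (q - 1)`.
-/

open Matrix

section AllOnes

variable {n α : Type*} [Fintype n]

theorem of_one_mul_of_one [NonAssocSemiring α] : (of 1 : Matrix n n α) * of 1 = Fintype.card n • of 1 := by
  ext i j
  simp [mul_apply]

theorem det_of_one_sub_one [CommRing α] [DecidableEq n] :
    det (of 1 - 1 : Matrix n n α) = (-1) ^ Fintype.card n * (1 - Fintype.card n) := by
  have h : (of 1 - 1 : Matrix n n α) =
      -(1 + (replicateCol Unit (-1 : n → α) * replicateRow Unit (1 : n → α) : Matrix n n α)) := by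
    ext i j
    simp [Matrix.mul_apply, sub_eq_add_neg]
  rw [h, det_neg, det_one_add_replicateCol_mul_replicateRow]
  simp [dotProduct, sub_eq_add_neg]

variable [NonAssocSemiring α] [AddCommGroup n]

theorem circulant_mul_of_one (v : n → α) : circulant v * of 1 = (∑ i, v i) • of 1 := by
  ext i j
  simp only [mul_apply, circulant_apply, of_apply, Pi.one_apply, mul_one, Matrix.smul_apply,
    smul_eq_mul]
  exact Fintype.sum_equiv (Equiv.subLeft i) _ _ fun _ => rfl

theorem of_one_mul_circulant (v : n → α) : of 1 * circulant v = (∑ i, v i) • of 1 := by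
  ext i j
  simp only [mul_apply, circulant_apply, of_apply, Pi.one_apply, one_mul, Matrix.smul_apply,
    smul_eq_mul, mul_one]
  exact Fintype.sum_equiv (Equiv.subRight j) _ _ fun _ => rfl

end AllOnes

section QuadraticChar

variable {F : Type*} [Field F] [Fintype F] [DecidableEq F]

theorem sum_quadraticChar_sub_mul_quadraticChar (hF : ringChar F ≠ 2) (d : F) :
    ∑ x, quadraticChar F (d - x) * quadraticChar F x =
      quadraticChar F (-1) * (if d = 0 then (Fintype.card F : ℤ) - 1 else -1) := by
  by_cases hd : d = 0
  · have hx (x : F) : quadraticChar F (d - x) * quadraticChar F x =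
        quadraticChar F (-1) * if x = 0 then 0 else 1 := by
      split_ifs with hx
      · simp [hx]
      · rw [hd, zero_sub, neg_eq_neg_one_mul, map_mul, mul_assoc, ← sq,
          quadraticChar_sq_one hx, mul_one]
    rw [Finset.sum_congr rfl fun x _ => hx x, ← Finset.mul_sum, if_pos hd]
    simp [Finset.sum_ite, Finset.filter_ne', Nat.cast_pred Fintype.card_pos]
  · have hx (x : F) : quadraticChar F (d - d * x) * quadraticChar F (d * x) =
        quadraticChar F x * (quadraticChar F)⁻¹ (1 - x) := by
      rw [(quadraticChar_isQuadratic F).inv, ← mul_one_sub, map_mul, map_mul,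
        mul_mul_mul_comm, ← sq, quadraticChar_sq_one hd, one_mul, mul_comm]
    rw [if_neg hd, ← Fintype.sum_equiv (Equiv.mulLeft₀ d hd) _ _ fun _ => rfl]
    simp only [Equiv.mulLeft₀_apply, hx]
    rw [← jacobiSum, jacobiSum_nontrivial_inv (quadraticChar_ne_one hF), mul_neg_one]

theorem circulant_quadraticChar_mul_self (hF : ringChar F ≠ 2) :
    circulant (quadraticChar F) * circulant (quadraticChar F) =
      quadraticChar F (-1) • (Fintype.card F • 1 - of 1) := by
  ext i j
  rw [circulant_mul, circulant_apply]
  simp only [mulVec, dotProduct, circulant_apply, sum_quadraticChar_sub_mul_quadraticChar hF,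
    Matrix.smul_apply, Matrix.sub_apply, one_apply, of_apply, sub_eq_zero, smul_eq_mul]
  split_ifs <;> simp

end QuadraticChar

section Legendre

variable {F : Type*} [Field F] [Fintype F] [DecidableEq F] {s : F → ℤ}

theorem two_mul_eq_one_add_quadraticChar (hbin : ∀ i, s i = 0 ∨ s i = 1)
    (hs : ∀ i, s i = 1 ↔ i ≠ 0 ∧ IsSquare i) (x : F) :
    2 * s x = 1 + quadraticChar F x - if x = 0 then 1 else 0 := by
  have := hs x
  rcases hbin x with h | h <;> by_cases hx : x = 0 <;>
    simp_all [quadraticChar_apply, quadraticCharFun]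

variable (h2s : ∀ x, 2 * s x = 1 + quadraticChar F x - if x = 0 then 1 else 0)
include h2s

theorem two_smul_circulant_eq :
    (2 : ℤ) • circulant s = of 1 + circulant (quadraticChar F) - 1 := by
  ext i j
  simp [circulant_apply, one_apply, h2s, sub_eq_zero]

theorem apply_mul_of_not_isSquare {g : F} (hg : ¬IsSquare g) (x : F) :
    s (g * x) = 1 - (if x = 0 then 1 else 0) - s x := by
  have hg0 : g ≠ 0 := by rintro rfl; exact hg IsSquare.zero
  have hgx := h2s (g * x)
  simp only [map_mul, quadraticChar_neg_one_iff_not_isSquare.mpr hg, mul_eq_zero, hg0,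
    false_or] at hgx
  have hx := h2s x
  omega

theorem det_of_one_sub_one_sub_circulant (hF : ringChar F ≠ 2) :
    det (of 1 - 1 - circulant s) = det (circulant s) := by
  obtain ⟨g, hg⟩ := FiniteField.exists_nonsquare hF
  have hg0 : g ≠ 0 := by rintro rfl; exact hg IsSquare.zero
  rw [← det_submatrix_equiv_self (Equiv.mulLeft₀ g hg0)]
  congr 1
  ext i j
  simp [circulant_apply, ← mul_sub, apply_mul_of_not_isSquare h2s hg, one_apply, sub_eq_zero, hg0]

theorem circulant_mul_of_one_sub_one_sub_circulant {m : ℕ} (hq : Fintype.card F = 4 * m + 1) :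
    circulant s * (of 1 - 1 - circulant s) = (m : ℤ) • (of 1 - 1) := by
  have hF : ringChar F ≠ 2 := by rw [Ne, FiniteField.even_card_iff_char_two]; omega
  have hχ : quadraticChar F (-1) = 1 :=
    (quadraticChar_one_iff_isSquare (neg_ne_zero.mpr one_ne_zero)).mpr
      (FiniteField.isSquare_neg_one_iff.mpr (by omega))
  set C := circulant (quadraticChar F)
  have hCC : C * C = Fintype.card F • 1 - of 1 := by
    rw [circulant_quadraticChar_mul_self hF, hχ, one_smul]
  have hCJ : C * of 1 = 0 := by
    rw [circulant_mul_of_one, quadraticChar_sum_zero hF, zero_smul]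
  have hJC : of 1 * C = 0 := by
    rw [of_one_mul_circulant, quadraticChar_sum_zero hF, zero_smul]
  apply smul_right_injective _ (four_ne_zero' ℤ)
  calc (4 : ℤ) • (circulant s * (of 1 - 1 - circulant s))
      = ((2 : ℤ) • circulant s) * ((2 : ℤ) • (of 1 - 1) - (2 : ℤ) • circulant s) := by
        rw [← smul_sub, Matrix.smul_mul, Matrix.mul_smul, smul_smul]; norm_num
    _ = (of 1 + C - 1) * (of 1 - C - 1) := by rw [two_smul_circulant_eq h2s]; congr 1; module
    _ = of 1 * of 1 - of 1 * C - C * C + C * of 1 - 2 • of 1 + 1 := by noncomm_ring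
    _ = (4 : ℤ) • ((m : ℤ) • (of 1 - 1)) := by
        rw [of_one_mul_of_one, hJC, hCC, hCJ, hq]
        module

theorem det_circulant_eq_or_eq_neg {m : ℕ} (hq : Fintype.card F = 4 * m + 1) :
    det (circulant s) = 2 * m * m ^ (2 * m) ∨ det (circulant s) = -(2 * m * m ^ (2 * m)) := by
  have hF : ringChar F ≠ 2 := by rw [Ne, FiniteField.even_card_iff_char_two]; omega
  have h := congrArg det (circulant_mul_of_one_sub_one_sub_circulant h2s hq)
  rw [det_mul, det_of_one_sub_one_sub_circulant h2s hF, det_smul, det_of_one_sub_one, hq] at h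
  rw [← sq_eq_sq_iff_eq_or_eq_neg, sq, h, Odd.neg_one_pow ⟨2 * m, by ring⟩]
  push_cast
  ring

end Legendre

theorem stmt11 (p : ℕ) (hp : p.Prime) (hp4 : p % 4 = 1) [NeZero p]
    (s : ZMod p → ℤ) (hbin : ∀ i, s i = 0 ∨ s i = 1)
    (hs : ∀ i : ZMod p, s i = 1 ↔ i ≠ 0 ∧ IsSquare i) :
    (Matrix.circulant s).det =
        (((p - 1) / 2 : ℕ) : ℤ) * (((p - 1) / 4 : ℕ) : ℤ) ^ ((p - 1) / 2) ∨
    (Matrix.circulant s).det =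
        -((((p - 1) / 2 : ℕ) : ℤ) * (((p - 1) / 4 : ℕ) : ℤ) ^ ((p - 1) / 2)) := by
  have := Fact.mk hp
  have hq : Fintype.card (ZMod p) = 4 * ((p - 1) / 4) + 1 := by rw [ZMod.card]; omega
  rw [show (p - 1) / 2 = 2 * ((p - 1) / 4) by omega, Nat.cast_mul, Nat.cast_two]
  exact det_circulant_eq_or_eq_neg (two_mul_eq_one_add_quadraticChar hbin hs) hq
end

section
/- Let p ≡ 1 (mod 4) be a prime and s the Legendre sequence of period p. Then gcd(P_s(2), 2^p - 1) = 1; that is, the 2-adic complexity of s equals p. -/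
/-!
Let `q` be a prime dividing both numbers. Then `2` is a primitive `p`-th root of unity in `𝔽_q`,
so `p ∣ q - 1`, and `i ↦ 2 ^ i` is a primitive additive character `ψ` of `ZMod p` with values
in `𝔽_q`. The quadratic character is `χ = 2 s - 1 + δ₀`, so the Gauss sum `g(χ, ψ)` equals
`2 P_s(2) + 1 = 1` in `𝔽_q`. On the other hand `g(χ, ψ)² = χ(-1) p = p` because
`p ≡ 1 (mod 4)`. Hence `p ≡ 1 (mod q)`, which is impossible since `1 < p < q`.
-/

open Finset

lemma ZMod.sum_univ_eq_sum_range {n : ℕ} [NeZero n] {M : Type*} [AddCommMonoid M]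
    (f : ZMod n → M) : ∑ a, f a = ∑ i ∈ range n, f i := by
  refine sum_bij' (fun a _ => a.val) (fun i _ => (i : ZMod n)) ?_ ?_ ?_ ?_ ?_
  · intro a _; exact mem_range.mpr a.val_lt
  · intro i _; exact mem_univ _
  · intro a _; exact ZMod.natCast_zmod_val a
  · intro i hi; exact ZMod.val_cast_of_lt (mem_range.mp hi)
  · intro a _; rw [ZMod.natCast_zmod_val]

section ZModChar

variable {R : Type*} [CommRing R] {p : ℕ} [NeZero p] {ζ : R}

lemma AddChar.sum_mul_zmodChar (hζ : ζ ^ p = 1) (f : ZMod p → R) :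
    ∑ a, f a * AddChar.zmodChar p hζ a = ∑ i ∈ range p, f i * ζ ^ i := by
  simp only [ZMod.sum_univ_eq_sum_range, AddChar.zmodChar_apply']

lemma AddChar.sum_zmodChar_eq_zero [IsDomain R] (hζ : IsPrimitiveRoot ζ p) (hp : 1 < p) :
    ∑ a, AddChar.zmodChar p hζ.pow_eq_one a = 0 := by
  have h := AddChar.sum_mul_zmodChar hζ.pow_eq_one 1
  simp only [Pi.one_apply, one_mul] at h
  rw [h, hζ.geom_sum_eq_zero hp]

end ZModChar

section QuadraticChar

variable {F : Type*} [Field F] [Fintype F] [DecidableEq F]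

lemma quadraticChar_eq_two_mul_sub_one_add_ite {s : F → ℤ} (hbin : ∀ a, s a = 0 ∨ s a = 1)
    (hs : ∀ a, s a = 1 ↔ a ≠ 0 ∧ IsSquare a) (a : F) :
    quadraticChar F a = 2 * s a - 1 + if a = 0 then 1 else 0 := by
  rcases eq_or_ne a 0 with rfl | ha
  · have : s 0 = 0 := (hbin 0).resolve_right fun h => ((hs 0).mp h).1 rfl
    simp [this]
  by_cases hsq : IsSquare a
  · rw [(quadraticChar_one_iff_isSquare ha).mpr hsq, (hs a).mpr ⟨ha, hsq⟩, if_neg ha]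
    norm_num
  · have : s a = 0 := (hbin a).resolve_right fun h => hsq ((hs a).mp h).2
    rw [quadraticChar_neg_one_iff_not_isSquare.mpr hsq, this, if_neg ha]
    norm_num

end QuadraticChar

lemma IsPrimitiveRoot.dvd_card_sub_one {K : Type*} [Field K] [Fintype K] {a : K} {k : ℕ}
    (h : IsPrimitiveRoot a k) (hk : k ≠ 0) : k ∣ Fintype.card K - 1 :=
  h.dvd_of_pow_eq_one _ (FiniteField.pow_card_sub_one_eq_one a (h.ne_zero hk))

lemma ZMod.isPrimitiveRoot_two_of_dvd_two_pow_sub_one {p q : ℕ} [Nontrivial (ZMod q)]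
    (hp : p.Prime) (h : (q : ℤ) ∣ 2 ^ p - 1) : IsPrimitiveRoot (2 : ZMod q) p := by
  have : Fact p.Prime := ⟨hp⟩
  have h2p : (2 : ZMod q) ^ p = 1 := by
    have := (ZMod.intCast_zmod_eq_zero_iff_dvd _ q).mpr h
    push_cast at this
    exact sub_eq_zero.mp this
  refine IsPrimitiveRoot.iff_orderOf.mpr (orderOf_eq_prime h2p fun h21 => ?_)
  exact one_ne_zero (by linear_combination h21 : (1 : ZMod q) = 0)

section GaussSum

variable {R : Type*} [CommRing R] [IsDomain R] {p : ℕ} [Fact p.Prime]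

lemma gaussSum_quadraticChar_zmodChar {ζ : R} (hζ : IsPrimitiveRoot ζ p) {s : ZMod p → ℤ}
    (hbin : ∀ a, s a = 0 ∨ s a = 1) (hs : ∀ a, s a = 1 ↔ a ≠ 0 ∧ IsSquare a) :
    gaussSum ((quadraticChar (ZMod p)).ringHomComp (Int.castRingHom R))
        (AddChar.zmodChar p hζ.pow_eq_one) = 2 * ∑ i ∈ range p, (s i : R) * ζ ^ i + 1 := by
  set ψ := AddChar.zmodChar p hζ.pow_eq_one
  have hχ (a : ZMod p) : (quadraticChar (ZMod p)).ringHomComp (Int.castRingHom R) a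
      = 2 * (s a : R) - 1 + if a = 0 then 1 else 0 := by
    rw [MulChar.ringHomComp_apply, quadraticChar_eq_two_mul_sub_one_add_ite hbin hs a]
    split_ifs <;> simp
  calc _ = ∑ a, (2 * (s a : R) - 1 + if a = 0 then 1 else 0) * ψ a := by
        simp only [gaussSum, hχ]
    _ = 2 * ∑ a, (s a : R) * ψ a - ∑ a, ψ a + ψ 0 := by
      simp [add_mul, sub_mul, sum_add_distrib, sum_sub_distrib, mul_sum, mul_assoc]
    _ = _ := by
      rw [AddChar.sum_mul_zmodChar, AddChar.sum_zmodChar_eq_zero hζ (Fact.out : p.Prime).one_lt,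
        AddChar.map_zero_eq_one, sub_zero]

lemma gaussSum_quadraticChar_sq_of_mod_four_eq_one (hp4 : p % 4 = 1) (hR : ringChar R ≠ 2)
    {ψ : AddChar (ZMod p) R} (hψ : ψ.IsPrimitive) :
    gaussSum ((quadraticChar (ZMod p)).ringHomComp (Int.castRingHom R)) ψ ^ 2 = p := by
  have hp2 : ringChar (ZMod p) ≠ 2 := by rw [ZMod.ringChar_zmod_n]; omega
  have hχ : (quadraticChar (ZMod p)).ringHomComp (Int.castRingHom R) ≠ 1 := by
    obtain ⟨a, ha⟩ := quadraticChar_exists_neg_one' hp2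
    refine MulChar.ne_one_iff.mpr ⟨a, ?_⟩
    simpa [ha] using Ring.neg_one_ne_one_of_char_ne_two hR
  rw [gaussSum_sq hχ ((quadraticChar_isQuadratic _).comp _) hψ, MulChar.ringHomComp_apply,
    quadraticChar_neg_one hp2, ZMod.card, ZMod.χ₄_nat_one_mod_four hp4]
  simp

end GaussSum

theorem stmt12_general (p : ℕ) (hp : p.Prime) (hp4 : p % 4 = 1)
    (s : ZMod p → ℤ) (hbin : ∀ i, s i = 0 ∨ s i = 1)
    (hs : ∀ i : ZMod p, s i = 1 ↔ i ≠ 0 ∧ IsSquare i) :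
    Int.gcd (∑ i ∈ Finset.range p, s (i : ZMod p) * 2 ^ i) (2 ^ p - 1) = 1 := by
  have : Fact p.Prime := ⟨hp⟩
  refine Nat.eq_one_iff_not_exists_prime_dvd.mpr fun q hq hqg => ?_
  have : Fact q.Prime := ⟨hq⟩
  have hqS := (Int.natCast_dvd_natCast.mpr hqg).trans (Int.gcd_dvd_left _ _)
  have hζ := ZMod.isPrimitiveRoot_two_of_dvd_two_pow_sub_one hp
    ((Int.natCast_dvd_natCast.mpr hqg).trans (Int.gcd_dvd_right _ _))
  have hpq : p < q := by
    have hdvd : p ∣ q - 1 := ZMod.card q ▸ hζ.dvd_card_sub_one hp.ne_zero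
    have := Nat.le_of_dvd (by have := hq.two_le; omega) hdvd
    omega
  have hq2 : ringChar (ZMod q) ≠ 2 := by rw [ZMod.ringChar_zmod_n]; have := hp.two_le; omega
  have hgauss := gaussSum_quadraticChar_sq_of_mod_four_eq_one hp4 hq2
    (AddChar.zmodChar_primitive_of_primitive_root p hζ)
  rw [gaussSum_quadraticChar_zmodChar hζ hbin hs] at hgauss
  have hS : ∑ i ∈ range p, (s i : ZMod q) * 2 ^ i = 0 := by
    exact_mod_cast (ZMod.intCast_zmod_eq_zero_iff_dvd _ q).mpr hqS
  rw [hS, mul_zero, zero_add, one_pow] at hgauss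
  have hval := congrArg ZMod.val hgauss
  rw [ZMod.val_one, ZMod.val_cast_of_lt hpq] at hval
  exact hp.one_lt.ne hval

theorem stmt12 (p : ℕ) (hp : p.Prime) (hp4 : p % 4 = 1) [NeZero p]
    (s : ZMod p → ℤ) (hbin : ∀ i, s i = 0 ∨ s i = 1)
    (hs : ∀ i : ZMod p, s i = 1 ↔ i ≠ 0 ∧ IsSquare i) :
    Int.gcd (∑ i ∈ Finset.range p, s (i : ZMod p) * 2 ^ i) (2 ^ p - 1) = 1 :=
  stmt12_general p hp hp4 s hbin hs
end

section
/- Let p ≡ 1 (mod 4) be a prime and let a be an odd integer with a^2 + b^2 = p for some integer b. Then gcd(1 + 2p + a^2·p, 2^p - 1) = 1 and gcd(1 - 2p + a^2·p, 2^p - 1) = 1. -/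
/-!
Every prime factor `r` of `2 ^ p - 1` satisfies `r ≡ 1 [MOD 2 * p]`, since `2` has order `p`
modulo `r` and `r` is odd. If such an `r` divided an even `N ≡ 1 [ZMOD p]`, then `N = r * M` with
`M` even and `M ≡ 1 [ZMOD p]`, so `|N| ≥ (2 * p + 1) * (p - 1)`. For `p ≥ 5` this exceeds
`(p + 1) ^ 2 ≥ |1 ± 2 * p + a ^ 2 * p|`, because `a ^ 2 ≤ p`.
-/

theorem Nat.Prime.modEq_one_of_dvd_pow_sub_one {p r : ℕ} (hr : r.Prime) (hp : p.Prime) {a : ℤ}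
    (hdvd : (r : ℤ) ∣ a ^ p - 1) (hndvd : ¬(r : ℤ) ∣ a - 1) : r ≡ 1 [MOD p] := by
  have := Fact.mk hr
  have := Fact.mk hp
  have hpow : (a : ZMod r) ^ p = 1 := by
    rw [← sub_eq_zero]
    exact_mod_cast (ZMod.intCast_zmod_eq_zero_iff_dvd _ r).mpr hdvd
  have hne_one : (a : ZMod r) ≠ 1 := fun h =>
    hndvd <| (ZMod.intCast_zmod_eq_zero_iff_dvd _ r).mp (by push_cast; rw [h, sub_self])
  have hne_zero : (a : ZMod r) ≠ 0 := by
    rintro h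
    rw [h, zero_pow hp.ne_zero] at hpow
    exact zero_ne_one hpow
  have hdvd : p ∣ r - 1 := orderOf_eq_prime hpow hne_one ▸ ZMod.orderOf_dvd_card_sub_one hne_zero
  exact ((Nat.modEq_iff_dvd' hr.one_le).mpr hdvd).symm

theorem Nat.Prime.intCast_modEq_one_of_dvd_two_pow_sub_one {p r : ℕ} (hr : r.Prime)
    (hp : p.Prime) (hp2 : p ≠ 2) (hdvd : (r : ℤ) ∣ 2 ^ p - 1) : (r : ℤ) ≡ 1 [ZMOD 2 * p] := by
  have hrp : r ≡ 1 [MOD p] :=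
    hr.modEq_one_of_dvd_pow_sub_one hp hdvd (by norm_num [Int.natCast_dvd, hr.ne_one])
  have hr2 : r ≡ 1 [MOD 2] := by
    have hodd : Odd ((2 : ℤ) ^ p - 1) := (Int.even_pow.mpr ⟨even_two, hp.ne_zero⟩).sub_odd odd_one
    have hr_odd : Odd (r : ℤ) :=
      Int.not_even_iff_odd.mp fun he => Int.not_even_iff_odd.mpr hodd (hdvd.even he)
    exact Nat.odd_iff.mp ((Int.odd_coe_nat r).mp hr_odd)
  have hcop : Nat.Coprime 2 p := (Nat.coprime_primes Nat.prime_two hp).mpr hp2.symm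
  exact_mod_cast (Nat.modEq_and_modEq_iff_modEq_mul hcop).mp ⟨hr2, hrp⟩

theorem Int.sub_one_le_abs_of_even_of_modEq_one {n M : ℤ} (hM : Even M) (h : M ≡ 1 [ZMOD n]) :
    n - 1 ≤ |M| := by
  have hM1 : M - 1 ≠ 0 := fun h0 => by
    rw [sub_eq_zero.mp h0] at hM
    exact Int.not_even_one hM
  have hn : n ≤ |M - 1| := by
    rcases le_or_gt n 0 with hn | hn
    · exact hn.trans (abs_nonneg _)
    · exact Int.le_of_dvd (abs_pos.mpr hM1) ((dvd_abs _ _).mpr h.symm.dvd)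
  linarith [abs_sub M 1, abs_one (α := ℤ)]

theorem Int.gcd_two_pow_sub_one_eq_one_of_even {p : ℕ} (hp : p.Prime) (hp2 : p ≠ 2) {N : ℤ}
    (hN : Even N) (hNp : N ≡ 1 [ZMOD p]) (hbound : |N| < (2 * p + 1) * (p - 1)) :
    Int.gcd N (2 ^ p - 1) = 1 := by
  refine Nat.eq_one_iff_not_exists_prime_dvd.mpr fun r hr hrg => ?_
  have hrN : (r : ℤ) ∣ N := (Int.natCast_dvd_natCast.mpr hrg).trans (Int.gcd_dvd_left _ _)
  have hrM : (r : ℤ) ∣ 2 ^ p - 1 := (Int.natCast_dvd_natCast.mpr hrg).trans (Int.gcd_dvd_right _ _)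
  obtain ⟨k, hk⟩ := (hr.intCast_modEq_one_of_dvd_two_pow_sub_one hp hp2 hrM).symm.dvd
  obtain ⟨M, rfl⟩ := hrN
  have hr_odd : Odd (r : ℤ) := ⟨p * k, by linarith⟩
  have hM : Even M := (Int.even_mul.mp hN).resolve_left (Int.not_even_iff_odd.mpr hr_odd)
  have hMp : M ≡ 1 [ZMOD p] :=
    (Int.modEq_iff_dvd.mpr ⟨2 * k * M, by linear_combination M * hk⟩).trans hNp
  have hr_two : (2 : ℤ) ≤ r := by exact_mod_cast hr.two_le
  have hk_pos : 1 ≤ k := by nlinarith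
  have hr_ge : 2 * (p : ℤ) + 1 ≤ r := by nlinarith
  have hM_ge := Int.sub_one_le_abs_of_even_of_modEq_one hM hMp
  rw [abs_mul, abs_of_nonneg (Int.natCast_nonneg r)] at hbound
  nlinarith [mul_le_mul hr_ge hM_ge (by nlinarith) (Int.natCast_nonneg r)]

theorem stmt13 (p : ℕ) (hp : p.Prime) (hp4 : p % 4 = 1) (a b : ℤ)
    (ha : Odd a) (hab : a ^ 2 + b ^ 2 = (p : ℤ)) :
    Int.gcd (1 + 2 * (p : ℤ) + a ^ 2 * p) (2 ^ p - 1) = 1 ∧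
    Int.gcd (1 - 2 * (p : ℤ) + a ^ 2 * p) (2 ^ p - 1) = 1 := by
  have hp5 : (5 : ℤ) ≤ p := by have := hp.two_le; omega
  have hp2 : p ≠ 2 := by omega
  obtain ⟨m, hm⟩ : Odd (a ^ 2 * p) := ha.pow.mul (Nat.odd_iff.mpr (by omega)).natCast
  have ha2_pos : 0 < a ^ 2 := sq_pos_of_ne_zero (by rintro rfl; exact Int.not_odd_zero ha)
  have ha2_le : a ^ 2 ≤ p := by nlinarith [sq_nonneg b]
  constructor
  · refine Int.gcd_two_pow_sub_one_eq_one_of_even hp hp2 ⟨m + 1 + p, by rw [hm]; ring⟩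
      (Int.modEq_iff_dvd.mpr ⟨-(a ^ 2 + 2), by ring⟩) (abs_lt.mpr ⟨by nlinarith, by nlinarith⟩)
  · refine Int.gcd_two_pow_sub_one_eq_one_of_even hp hp2 ⟨m + 1 - p, by rw [hm]; ring⟩
      (Int.modEq_iff_dvd.mpr ⟨-(a ^ 2 - 2), by ring⟩) (abs_lt.mpr ⟨by nlinarith, by nlinarith⟩)
end

section
/- Let p ≡ 1 (mod 8) be a prime, let λ be a multiplicative character of F_p of order 4, write G = G(λ;1) = \sum_{x∈F_p^*} λ(x)e^{2πix/p} with R = Re(G), I = Im(G), and let B_i = \sum_{x∈D_i^{(4,p)}} e^{2πix/p} for the quartic cyclotomic classes D_i^{(4,p)}. Then 16(B_0+B_1)(B_1+B_2)(B_2+B_3)(B_3+B_0) = 1 - 2p + a^2·p, where a is the odd integer with a^2 + b^2 = p and a ≡ -(2/p) (mod 4). -/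
/-!
Let `χ` be the quartic character with `χ(α) = i` and put `X = B₀ - B₂`, `Y = B₁ - B₃`, so that
the Gauss sums are `G(χ) = X + iY` and `G(χ̄) = X - iY`, while `B₀ + B₁ + B₂ + B₃ = G(1) = -1`.
Eliminating `B₃`, the product equals `1 - 2(X² + Y²) + (X² - Y²)²`.

As `χ(-1) = 1` for `p ≡ 1 (mod 8)`, `X² + Y² = G(χ)G(χ̄) = p`. With the Jacobi sum
`J = J(χ, χ) = A + Bi` one has `G(χ)² = G(χ²)J`, `G(χ̄)² = G(χ²)J̄` and `G(χ²)² = p`, hence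
`(X² - Y²)² = A²p`. Finally `J ≡ -1 mod (1 - i)²` makes `A` odd and `A² + B² = |J|² = p`,
which pins down `A² = a²`.
-/

open Finset

theorem Finset.sum_range_mul_eq_sum_sum_add {M : Type*} [AddCommMonoid M] (n m : ℕ)
    (f : ℕ → M) :
    ∑ j ∈ range (n * m), f j = ∑ r ∈ range n, ∑ k ∈ range m, f (r + n * k) := by
  induction m with
  | zero => simp
  | succ m ih =>
    rw [mul_add_one, sum_range_add, ih]
    simp only [sum_range_succ, sum_add_distrib, add_comm]

namespace Complex

theorem exists_intCast_add_intCast_mul_I_of_mem_adjoin {z : ℂ}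
    (hz : z ∈ Algebra.adjoin ℤ {I}) : ∃ m n : ℤ, z = m + n * I := by
  induction hz using Algebra.adjoin_induction with
  | mem x hx => exact ⟨0, 1, by simp [Set.mem_singleton_iff.mp hx]⟩
  | algebraMap r => exact ⟨r, 0, by simp⟩
  | add x y _ _ hx hy =>
    obtain ⟨a, b, rfl⟩ := hx
    obtain ⟨c, d, rfl⟩ := hy
    exact ⟨a + c, b + d, by push_cast; ring⟩
  | mul x y _ _ hx hy =>
    obtain ⟨a, b, rfl⟩ := hx
    obtain ⟨c, d, rfl⟩ := hy
    exact ⟨a * c - b * d, a * d + b * c, by push_cast; linear_combination (↑b * ↑d : ℂ) * I_sq⟩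

end Complex

theorem Int.sq_eq_sq_of_sq_add_sq_eq_prime {p : ℕ} (hp : p.Prime) (hp2 : Odd p) {a b c d : ℤ}
    (ha : Odd a) (hc : Odd c) (hab : a ^ 2 + b ^ 2 = p) (hcd : c ^ 2 + d ^ 2 = p) :
    a ^ 2 = c ^ 2 := by
  have hp0 : (p : ℤ) ≠ 0 := by exact_mod_cast hp.ne_zero
  have hd : Even d := Int.even_pow.mp ((Int.odd_add.mp (hcd ▸ hp2.natCast)).mp (hc.pow)) |>.1
  have key (b : ℤ) (hab : a ^ 2 + b ^ 2 = p) (hdvd : (p : ℤ) ∣ a * d - b * c) : a ^ 2 = c ^ 2 := by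
    obtain ⟨k, hk⟩ := hdvd
    have hodd : Odd (a * c + b * d) := (ha.mul hc).add_even (hd.mul_left b)
    have hsum : (a * d - b * c) ^ 2 + (a * c + b * d) ^ 2 = p ^ 2 := by
      linear_combination (c ^ 2 + d ^ 2) * hab + p * hcd
    -- `a * c + b * d` is odd, hence nonzero, which forces `|a * d - b * c| < p`.
    have hk0 : k = 0 := by
      have h1 : 0 < (a * c + b * d) ^ 2 :=
        sq_pos_of_ne_zero fun h => by simp [h] at hodd
      have hk1 : (p : ℤ) ^ 2 * k ^ 2 < (p : ℤ) ^ 2 * 1 := by rw [hk] at hsum; linarith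
      have hk2 := lt_of_mul_lt_mul_left hk1 (sq_nonneg _)
      rw [sq_lt_one_iff_abs_lt_one, abs_lt] at hk2
      omega
    have h0 : (p : ℤ) * (a ^ 2 - c ^ 2) = 0 := by
      rw [hk0, mul_zero] at hk
      linear_combination (a * d + b * c) * hk - a ^ 2 * hcd + c ^ 2 * hab
    exact sub_eq_zero.mp ((mul_eq_zero.mp h0).resolve_left hp0)
  have hprod : (p : ℤ) ∣ (a * d - b * c) * (a * d - -b * c) :=
    ⟨a ^ 2 - c ^ 2, by linear_combination a ^ 2 * hcd - c ^ 2 * hab⟩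
  rcases (Nat.prime_iff_prime_int.mp hp).dvd_or_dvd hprod with h | h
  · exact key b hab h
  · exact key (-b) (by rwa [neg_sq]) h

theorem sixteen_mul_prod_eq_of_sum_eq_neg_one {R : Type*} [CommRing R] {b₀ b₁ b₂ b₃ : R}
    (hsum : b₀ + b₁ + b₂ + b₃ = -1) :
    16 * (b₀ + b₁) * (b₁ + b₂) * (b₂ + b₃) * (b₃ + b₀) =
      1 - 2 * ((b₀ - b₂) ^ 2 + (b₁ - b₃) ^ 2) + ((b₀ - b₂) ^ 2 - (b₁ - b₃) ^ 2) ^ 2 := by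
  obtain rfl : b₃ = -1 - b₀ - b₁ - b₂ := by linear_combination hsum
  ring

section FiniteField

variable {F : Type*} [Field F] [Fintype F] {α : F}

theorem IsPrimitiveRoot.sum_eq_sum_range_pow {R : Type*} [AddCommMonoid R]
    (hα : IsPrimitiveRoot α (Fintype.card F - 1)) {f : F → R} (hf : f 0 = 0) :
    ∑ x, f x = ∑ j ∈ range (Fintype.card F - 1), f (α ^ j) := by
  classical
  have : NeZero (Fintype.card F - 1) := ⟨(tsub_pos_of_lt Fintype.one_lt_card).ne'⟩
  rw [← sum_erase univ hf]
  refine (sum_nbij (α ^ ·) (fun j _ => ?_) (fun i hi j hj h => ?_) (fun x hx => ?_)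
    (fun _ _ => rfl)).symm
  · simpa using pow_ne_zero j (hα.ne_zero NeZero.out)
  · exact hα.pow_inj (mem_range.mp hi) (mem_range.mp hj) h
  · obtain ⟨i, hi, rfl⟩ := hα.eq_pow_of_pow_eq_one
      (FiniteField.pow_card_sub_one_eq_one x (ne_of_mem_erase hx))
    exact ⟨i, by simpa using hi, rfl⟩

variable {R : Type*} [CommRing R]

/-- The sum of `ψ` over the cyclotomic class `D_r = α ^ r ⟨α ^ n⟩` of index `n ∣ #F - 1`;
for `n = 4` and the standard character of `ZMod p` this is the `B_r` of the statement. -/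
def gaussPeriod (ψ : AddChar F R) (α : F) (n r : ℕ) : R :=
  ∑ k ∈ range ((Fintype.card F - 1) / n), ψ (α ^ (r + n * k))

theorem gaussSum_eq_sum_gaussPeriod (hα : IsPrimitiveRoot α (Fintype.card F - 1)) {n : ℕ}
    (hn : n ∣ Fintype.card F - 1) {χ : MulChar F R} {c : R} (hc : c ^ n = 1)
    (hχ : ∀ j, χ (α ^ j) = c ^ j) (ψ : AddChar F R) :
    gaussSum χ ψ = ∑ r ∈ range n, c ^ r * gaussPeriod ψ α n r := by
  rw [gaussSum, hα.sum_eq_sum_range_pow (by simp [χ.map_nonunit not_isUnit_zero]),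
    ← Nat.mul_div_cancel' hn, sum_range_mul_eq_sum_sum_add]
  refine sum_congr rfl fun r _ => ?_
  rw [gaussPeriod, mul_sum]
  refine sum_congr rfl fun k _ => ?_
  rw [hχ, pow_add, pow_mul, hc, one_pow, mul_one]

theorem sum_gaussPeriod (hα : IsPrimitiveRoot α (Fintype.card F - 1)) {n : ℕ}
    (hn : n ∣ Fintype.card F - 1) [IsDomain R] {ψ : AddChar F R} (hψ : ψ ≠ 1) :
    ∑ r ∈ range n, gaussPeriod ψ α n r = -1 := by
  have h1 (j : ℕ) : (1 : MulChar F R) (α ^ j) = 1 ^ j := by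
    rw [one_pow, MulChar.one_apply ((hα.isUnit (tsub_pos_of_lt Fintype.one_lt_card).ne').pow j)]
  simpa using (gaussSum_eq_sum_gaussPeriod hα hn (one_pow n) h1 ψ).symm.trans
    (gaussSum_one_left hψ)

theorem IsPrimitiveRoot.exists_unit_forall_mem_zpowers
    (hα : IsPrimitiveRoot α (Fintype.card F - 1)) :
    ∃ g : Fˣ, (g : F) = α ∧ ∀ x, x ∈ Subgroup.zpowers g := by
  classical
  have : NeZero (Fintype.card F - 1) := ⟨(tsub_pos_of_lt Fintype.one_lt_card).ne'⟩
  refine ⟨(hα.isUnit NeZero.out).unit, rfl, fun x => ?_⟩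
  rw [(hα.isUnit_unit NeZero.out).zpowers_eq, mem_rootsOfUnity, ← Fintype.card_units]
  exact pow_card_eq_one

theorem exists_mulChar_apply_pow_eq_pow (hα : IsPrimitiveRoot α (Fintype.card F - 1)) {ζ : Rˣ}
    (hζ : ζ ^ (Fintype.card F - 1) = 1) : ∃ χ : MulChar F R, ∀ j, χ (α ^ j) = (ζ : R) ^ j := by
  classical
  obtain ⟨g, rfl, hg⟩ := hα.exists_unit_forall_mem_zpowers
  have hζ' : ζ ∈ rootsOfUnity (Fintype.card Fˣ) R := by
    rwa [mem_rootsOfUnity, Fintype.card_units]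
  refine ⟨MulChar.ofRootOfUnity hζ' hg, fun j => ?_⟩
  rw [map_pow, MulChar.ofRootOfUnity_spec]

theorem gaussSum_mul_gaussSum_inv [IsDomain R] {χ : MulChar F R} (hχ : χ ≠ 1)
    {ψ : AddChar F R} (hψ : ψ.IsPrimitive) :
    gaussSum χ ψ * gaussSum χ⁻¹ ψ = χ (-1) * Fintype.card F := by
  rw [← mul_gaussSum_inv_eq_gaussSum χ⁻¹, mul_left_comm, gaussSum_mul_gaussSum_eq_card hχ hψ,
    MulChar.inv_apply', inv_neg_one]

open Complex ComplexConjugate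

theorem jacobiSum_inv_inv (χ φ : MulChar F ℂ) : jacobiSum χ⁻¹ φ⁻¹ = conj (jacobiSum χ φ) := by
  rw [← MulChar.star_eq_inv, ← MulChar.star_eq_inv]
  exact jacobiSum_ringHomComp χ φ (starRingEnd ℂ)

theorem exists_jacobiSum_eq_odd_add_mul_I (hq : 4 ∣ Fintype.card F - 1) {χ : MulChar F ℂ}
    (hχ4 : χ ^ 4 = 1) (hχ2 : χ ^ 2 ≠ 1) :
    ∃ A B : ℤ, Odd A ∧ A ^ 2 + B ^ 2 = Fintype.card F ∧ jacobiSum χ χ = A + B * I := by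
  obtain ⟨A, B, hA, hJ⟩ : ∃ A B : ℤ, Odd A ∧ jacobiSum χ χ = A + B * I := by
    obtain ⟨z, hz, hJ⟩ :=
      exists_jacobiSum_eq_neg_one_add (by norm_num) hχ4 hχ4 hq isPrimitiveRoot_I
    obtain ⟨m, n, rfl⟩ := exists_intCast_add_intCast_mul_I_of_mem_adjoin hz
    refine ⟨2 * n - 1, -2 * m, ⟨n - 1, by ring⟩, ?_⟩
    rw [hJ]
    push_cast
    linear_combination (m - 2 * n + n * I : ℂ) * I_sq
  refine ⟨A, B, hA, ?_, hJ⟩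
  have hχ : χ ≠ 1 := fun h => hχ2 (by rw [h, one_pow])
  have hchar : ringChar ℂ ≠ ringChar F := by
    simpa only [ringChar.eq_zero] using (CharP.ringChar_ne_zero_of_finite F).symm
  have hnorm := jacobiSum_mul_jacobiSum_inv hchar hχ hχ (by rwa [← sq])
  rw [jacobiSum_inv_inv, hJ, map_add, map_mul, conj_I, map_intCast, map_intCast] at hnorm
  exact_mod_cast (by linear_combination hnorm + (B : ℂ) ^ 2 * I_sq :
    (A : ℂ) ^ 2 + B ^ 2 = Fintype.card F)

theorem gaussSum_sq_add_gaussSum_inv_sq_sq {χ : MulChar F ℂ} (hχ4 : χ ^ 4 = 1) (hχ2 : χ ^ 2 ≠ 1)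
    {ψ : AddChar F ℂ} (hψ : ψ.IsPrimitive) :
    (gaussSum χ ψ ^ 2 + gaussSum χ⁻¹ ψ ^ 2) ^ 2 =
      (jacobiSum χ χ + conj (jacobiSum χ χ)) ^ 2 * Fintype.card F := by
  have hinv : χ⁻¹ * χ⁻¹ = χ ^ 2 := by
    rw [← mul_inv, ← sq, inv_eq_iff_mul_eq_one, ← pow_add, hχ4]
  have hg : gaussSum (χ ^ 2) ψ ^ 2 = Fintype.card F := by
    rw [gaussSum_sq hχ2 (MulChar.isQuadratic_iff_sq_eq_one.mpr (by rw [← pow_mul, hχ4])) hψ,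
      MulChar.pow_apply' χ two_ne_zero, ← map_pow, neg_one_sq, map_one, one_mul]
  have hG := jacobiSum_mul_nontrivial (by rwa [← sq]) ψ (χ := χ) (φ := χ)
  have hH := jacobiSum_mul_nontrivial (by rwa [hinv]) ψ (χ := χ⁻¹) (φ := χ⁻¹)
  rw [← sq] at hG
  rw [hinv, jacobiSum_inv_inv] at hH
  rw [sq (gaussSum χ ψ), sq (gaussSum χ⁻¹ ψ), ← hG, ← hH, ← hg]
  ring

theorem exists_mulChar_apply_pow_eq_I_pow (hα : IsPrimitiveRoot α (Fintype.card F - 1))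
    (hq : 4 ∣ Fintype.card F - 1) :
    ∃ χ : MulChar F ℂ, χ ^ 4 = 1 ∧ χ ^ 2 ≠ 1 ∧ ∀ j, χ (α ^ j) = I ^ j := by
  obtain ⟨χ, hχ⟩ := exists_mulChar_apply_pow_eq_pow hα (ζ := Units.mk0 I I_ne_zero)
    (Units.ext (by simpa using isPrimitiveRoot_I.pow_eq_one_iff_dvd _ |>.mpr hq))
  simp only [Units.val_mk0] at hχ
  obtain ⟨g, rfl, hg⟩ := hα.exists_unit_forall_mem_zpowers
  have hχg (n : ℕ) (hn : n ≠ 0) : (χ ^ n) g = I ^ n := by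
    rw [MulChar.pow_apply' χ hn, ← pow_one (g : F), hχ, pow_one]
  refine ⟨χ, ?_, fun h => ?_, hχ⟩
  · rw [MulChar.eq_iff hg, hχg 4 (by norm_num), I_pow_four, MulChar.one_apply_coe]
  · have := hχg 2 two_ne_zero
    rw [h, MulChar.one_apply_coe, I_sq] at this
    norm_num at this

section QuarticCharacter

variable (hα : IsPrimitiveRoot α (Fintype.card F - 1)) {χ : MulChar F ℂ}
  (hχ : ∀ j, χ (α ^ j) = I ^ j)
include hα hχ

theorem gaussSum_eq_gaussPeriod_four (hq : 4 ∣ Fintype.card F - 1) (ψ : AddChar F ℂ) :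
    gaussSum χ ψ = (gaussPeriod ψ α 4 0 - gaussPeriod ψ α 4 2) +
      (gaussPeriod ψ α 4 1 - gaussPeriod ψ α 4 3) * I := by
  rw [gaussSum_eq_sum_gaussPeriod hα hq I_pow_four hχ]
  simp only [sum_range_succ, sum_range_zero]
  linear_combination (gaussPeriod ψ α 4 2 + gaussPeriod ψ α 4 3 * I) * I_sq

theorem gaussSum_inv_eq_gaussPeriod_four (hq : 4 ∣ Fintype.card F - 1) (ψ : AddChar F ℂ) :
    gaussSum χ⁻¹ ψ = (gaussPeriod ψ α 4 0 - gaussPeriod ψ α 4 2) -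
      (gaussPeriod ψ α 4 1 - gaussPeriod ψ α 4 3) * I := by
  have hχ' (j : ℕ) : χ⁻¹ (α ^ j) = (-I) ^ j := by
    rw [MulChar.inv_apply_eq_inv', hχ, ← inv_pow, inv_I]
  rw [gaussSum_eq_sum_gaussPeriod hα hq (by rw [neg_pow, I_pow_four]; norm_num) hχ']
  simp only [sum_range_succ, sum_range_zero]
  linear_combination (gaussPeriod ψ α 4 2 - gaussPeriod ψ α 4 3 * I) * I_sq

theorem MulChar.apply_neg_one_eq_one_of_eight_dvd (h8 : 8 ∣ Fintype.card F - 1) : χ (-1) = 1 := by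
  obtain ⟨m, hm⟩ := h8
  have hneg : α ^ (4 * m) = -1 :=
    (hα.pow (tsub_pos_of_lt Fintype.one_lt_card) (by rw [hm]; ring)).eq_neg_one_of_two_right
  rw [← hneg, hχ, pow_mul, I_pow_four, one_pow]

end QuarticCharacter

theorem gaussPeriod_four_sq_add_sq (hα : IsPrimitiveRoot α (Fintype.card F - 1))
    (h8 : 8 ∣ Fintype.card F - 1) {ψ : AddChar F ℂ} (hψ : ψ.IsPrimitive) :
    (gaussPeriod ψ α 4 0 - gaussPeriod ψ α 4 2) ^ 2 +
      (gaussPeriod ψ α 4 1 - gaussPeriod ψ α 4 3) ^ 2 = Fintype.card F := by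
  have hq : 4 ∣ Fintype.card F - 1 := dvd_trans ⟨2, rfl⟩ h8
  obtain ⟨χ, -, hχ2, hχ⟩ := exists_mulChar_apply_pow_eq_I_pow hα hq
  have hχ1 : χ ≠ 1 := fun h => hχ2 (by rw [h, one_pow])
  have h := gaussSum_mul_gaussSum_inv hχ1 hψ
  rw [gaussSum_eq_gaussPeriod_four hα hχ hq, gaussSum_inv_eq_gaussPeriod_four hα hχ hq,
    MulChar.apply_neg_one_eq_one_of_eight_dvd hα hχ h8, one_mul] at h
  linear_combination h + (gaussPeriod ψ α 4 1 - gaussPeriod ψ α 4 3) ^ 2 * I_sq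

theorem exists_gaussPeriod_four_sq_sub_sq_sq (hα : IsPrimitiveRoot α (Fintype.card F - 1))
    (hq : 4 ∣ Fintype.card F - 1) {ψ : AddChar F ℂ} (hψ : ψ.IsPrimitive) :
    ∃ A B : ℤ, Odd A ∧ A ^ 2 + B ^ 2 = Fintype.card F ∧
      ((gaussPeriod ψ α 4 0 - gaussPeriod ψ α 4 2) ^ 2 -
        (gaussPeriod ψ α 4 1 - gaussPeriod ψ α 4 3) ^ 2) ^ 2 = A ^ 2 * Fintype.card F := by
  obtain ⟨χ, hχ4, hχ2, hχ⟩ := exists_mulChar_apply_pow_eq_I_pow hα hq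
  obtain ⟨A, B, hA, hAB, hJ⟩ := exists_jacobiSum_eq_odd_add_mul_I hq hχ4 hχ2
  refine ⟨A, B, hA, hAB, ?_⟩
  have h := gaussSum_sq_add_gaussSum_inv_sq_sq hχ4 hχ2 hψ
  set X := gaussPeriod ψ α 4 0 - gaussPeriod ψ α 4 2
  set Y := gaussPeriod ψ α 4 1 - gaussPeriod ψ α 4 3
  have hXY : (X + Y * I) ^ 2 + (X - Y * I) ^ 2 = 2 * (X ^ 2 - Y ^ 2) := by
    linear_combination (2 * Y ^ 2) * I_sq
  rw [gaussSum_eq_gaussPeriod_four hα hχ hq, gaussSum_inv_eq_gaussPeriod_four hα hχ hq, hXY, hJ,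
    map_add, map_mul, conj_I, map_intCast, map_intCast] at h
  linear_combination (1 / 4 : ℂ) * h

end FiniteField

theorem ZMod.gaussPeriod_stdAddChar (p : ℕ) [Fact p.Prime] (α : ZMod p) (n r : ℕ) :
    gaussPeriod ZMod.stdAddChar α n r = ∑ k ∈ range ((p - 1) / n),
      Complex.exp (2 * Real.pi * Complex.I * (((α ^ (r + n * k)).val : ℂ)) / p) := by
  simp only [gaussPeriod, ZMod.card, ZMod.stdAddChar_apply, ZMod.toCircle_apply]

theorem stmt14_general (p : ℕ) [Fact p.Prime] (hp8 : p % 8 = 1)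
    (α : ZMod p) (hα : orderOf α = p - 1)
    (B : ℕ → ℂ)
    (hB : ∀ i, B i = ∑ k ∈ Finset.range ((p - 1) / 4),
      Complex.exp (2 * Real.pi * Complex.I * (((α ^ (i + 4 * k)).val : ℂ)) / p))
    (a b : ℤ) (ha : Odd a) (hab : a ^ 2 + b ^ 2 = (p : ℤ)) :
    16 * (B 0 + B 1) * (B 1 + B 2) * (B 2 + B 3) * (B 3 + B 0) =
      1 - 2 * (p : ℂ) + (a : ℂ) ^ 2 * p := by
  have hcard : Fintype.card (ZMod p) = p := ZMod.card p
  have hprim : IsPrimitiveRoot α (Fintype.card (ZMod p) - 1) := by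
    rw [hcard, ← hα]; exact IsPrimitiveRoot.orderOf α
  have h8 : 8 ∣ Fintype.card (ZMod p) - 1 := by rw [hcard]; omega
  have h4 : 4 ∣ Fintype.card (ZMod p) - 1 := by rw [hcard]; omega
  have hψ := ZMod.isPrimitive_stdAddChar p
  have hperiod (r : ℕ) : B r = gaussPeriod ZMod.stdAddChar α 4 r := by
    rw [hB, ZMod.gaussPeriod_stdAddChar]
  obtain ⟨A, _, hA, hAB, hsq⟩ := exists_gaussPeriod_four_sq_sub_sq_sq hprim h4 hψ
  have hAa : (A : ℂ) ^ 2 = a ^ 2 := by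
    exact_mod_cast Int.sq_eq_sq_of_sq_add_sq_eq_prime Fact.out (Nat.odd_iff.mpr (by omega)) hA ha
      (hcard ▸ hAB) hab
  have hsum := sum_gaussPeriod hprim h4 (by simpa using hψ one_ne_zero)
  simp only [sum_range_succ, sum_range_zero, zero_add] at hsum
  simp only [hperiod]
  rw [sixteen_mul_prod_eq_of_sum_eq_neg_one hsum, gaussPeriod_four_sq_add_sq hprim h8 hψ, hsq,
    hcard, hAa]

theorem stmt14 (p : ℕ) [Fact p.Prime] (hp8 : p % 8 = 1)
    (α : ZMod p) (hα : orderOf α = p - 1)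
    (B : ℕ → ℂ)
    (hB : ∀ i, B i = ∑ k ∈ Finset.range ((p - 1) / 4),
      Complex.exp (2 * Real.pi * Complex.I * (((α ^ (i + 4 * k)).val : ℂ)) / p))
    (a b : ℤ) (ha : Odd a) (hab : a ^ 2 + b ^ 2 = (p : ℤ))
    (ha4 : (a : ZMod 4) = ((-legendreSym p 2 : ℤ) : ZMod 4)) :
    16 * (B 0 + B 1) * (B 1 + B 2) * (B 2 + B 3) * (B 3 + B 0) =
      1 - 2 * (p : ℂ) + (a : ℂ) ^ 2 * p :=
  stmt14_general p hp8 α hα B hB a b ha hab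
end

section
/- Let p ≡ 1 (mod 4) be a prime and let s be the Ding-Helleseth-Lam sequence of period p, with s_i = 1 iff i ∈ D_0^{(4,p)} ∪ D_1^{(4,p)}. Then gcd(P_s(2), 2^p - 1) = 1; that is, the 2-adic complexity of s equals p. -/
/-!
Suppose a prime `q` divides both `P_s(2)` and `2 ^ p - 1`. Then `q ≡ 1 (mod p)`, and in a field of
characteristic `q` containing a square root `ζ` of `-1`, `θ = 2` is a nontrivial `p`-th root of
unity. Let `χ` be the quartic character with `χ α = i` and take Gauss sums with respect to
`x ↦ θ ^ x`. Expanding the indicator of `D₀ ∪ D₁` in the characters `1, χ, χ³` turns `P_s(2) = 0`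
into `(1 - ζ) G(χ) + (1 + ζ) G(χ³) = 2`. Squaring, and using the relations between Gauss and
Jacobi sums, gives `q ∣ (1 - χ(-1) p)² - p b² = 1 + p (a² - 2 χ(-1))`, where `J(χ, χ) = a + b i`,
`a² + b² = p` and `b` is even. That number is even, `≡ 1 (mod p)` and lies between `1 - 2p` and
`(p + 1)²`, so no odd `q ≡ 1 (mod p)` divides it.
-/

open Finset

local notation "ℤ[i]" => GaussianInt

lemma GaussianInt.sqrtd_pow_four : (Zsqrtd.sqrtd : ℤ[i]) ^ 4 = 1 := by decide

lemma GaussianInt.sqrtd_pow_mod_four (m : ℕ) :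
    (Zsqrtd.sqrtd : ℤ[i]) ^ m = Zsqrtd.sqrtd ^ (m % 4) := by
  conv_lhs => rw [← Nat.mod_add_div m 4, pow_add, pow_mul, GaussianInt.sqrtd_pow_four, one_pow,
    mul_one]

lemma GaussianInt.isPrimitiveRoot_sqrtd : IsPrimitiveRoot (Zsqrtd.sqrtd : ℤ[i]) 4 :=
  IsPrimitiveRoot.of_map_of_injective (f := GaussianInt.toComplex)
    (by simpa [GaussianInt.toComplex_def] using Complex.isPrimitiveRoot_I)
    GaussianInt.toComplex_injective

lemma exists_pow_four_mul_iff {M : Type*} [Monoid M] {α : M} (hα : IsOfFinOrder α)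
    (h4 : 4 ∣ orderOf α) (m : ℕ) :
    (∃ k : ℕ, α ^ m = α ^ (4 * k) ∨ α ^ m = α ^ (1 + 4 * k)) ↔ m % 4 < 2 := by
  constructor
  · rintro ⟨k, hk | hk⟩ <;>
    · have := (hα.pow_eq_pow_iff_modEq.mp hk).of_dvd h4
      unfold Nat.ModEq at this
      omega
  · intro hm
    refine ⟨m / 4, ?_⟩
    rcases (by omega : m % 4 = 0 ∨ m % 4 = 1) with h | h
    · exact Or.inl (by congr 1; omega)
    · exact Or.inr (by congr 1; omega)

lemma ZMod.sum_range_natCast {M : Type*} [AddCommMonoid M] (n : ℕ) [NeZero n] (g : ZMod n → M) :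
    ∑ i ∈ range n, g i = ∑ x, g x :=
  sum_nbij' (↑) ZMod.val (fun _ _ ↦ mem_univ _) (fun x _ ↦ mem_range.mpr x.val_lt)
    (fun _ hi ↦ ZMod.val_cast_of_lt (mem_range.mp hi)) (fun x _ ↦ ZMod.natCast_zmod_val x)
    (fun _ _ ↦ rfl)

section GaussSum

variable {F K : Type*} [Field F] [Fintype F] [Field K] {χ : MulChar F K} {ψ : AddChar F K}

lemma gaussSum_sq_of_orderOf_eq_four (hχ : orderOf χ = 4) (hψ : ψ.IsPrimitive) :
    gaussSum (χ ^ 2) ψ ^ 2 = Fintype.card F := by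
  have hχ2 : orderOf (χ ^ 2) = 2 := by
    rw [orderOf_pow_of_dvd (by norm_num) (by rw [hχ]; norm_num), hχ]
  have h := gaussSum_mul_gaussSum_pow_orderOf_sub_one (χ := χ ^ 2) (ψ := ψ)
    (fun h ↦ by simp [h] at hχ2) hψ
  rw [hχ2, MulChar.pow_apply' _ (by norm_num), sq (χ (-1)), ← map_mul, neg_one_mul, neg_neg,
    map_one, one_mul, pow_one] at h
  rw [sq, h]

theorem card_mul_sq_eq_of_gaussSum_combination (h2 : (2 : K) ≠ 0) (hχ : orderOf χ = 4)
    (hψ : ψ.IsPrimitive) {ζ : K} (hζ : ζ ^ 2 = -1)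
    (h : (1 - ζ) * gaussSum χ ψ + (1 + ζ) * gaussSum (χ ^ 3) ψ = 2) :
    (Fintype.card F : K) * (ζ * (jacobiSum (χ ^ 3) (χ ^ 3) - jacobiSum χ χ) / 2) ^ 2 =
      (1 - χ (-1) * Fintype.card F) ^ 2 := by
  have hχ2 : χ ^ 2 ≠ 1 := pow_ne_one_of_lt_orderOf (by norm_num) (by rw [hχ]; norm_num)
  have h13 : gaussSum χ ψ * gaussSum (χ ^ 3) ψ = χ (-1) * Fintype.card F := by
    have h := gaussSum_mul_gaussSum_pow_orderOf_sub_one (χ := χ) (ψ := ψ)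
      (fun h ↦ by simp [h] at hχ) hψ
    rwa [hχ] at h
  have h11 : gaussSum (χ ^ 2) ψ * jacobiSum χ χ = gaussSum χ ψ * gaussSum χ ψ := by
    rw [sq] at hχ2 ⊢
    exact jacobiSum_mul_nontrivial hχ2 ψ
  have h33 : gaussSum (χ ^ 2) ψ * jacobiSum (χ ^ 3) (χ ^ 3) =
      gaussSum (χ ^ 3) ψ * gaussSum (χ ^ 3) ψ := by
    have h6 : χ ^ 3 * χ ^ 3 = χ ^ 2 := by
      rw [← pow_add, show 3 + 3 = 4 + 2 by rfl, pow_add, ← hχ, pow_orderOf_eq_one, one_mul]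
    rw [← h6] at hχ2 ⊢
    exact jacobiSum_mul_nontrivial hχ2 ψ
  set G₁ := gaussSum χ ψ
  set G₂ := gaussSum (χ ^ 2) ψ
  set G₃ := gaussSum (χ ^ 3) ψ
  -- Square the relation, using `(1 ∓ ζ)² = ∓2ζ` and `(1 - ζ)(1 + ζ) = 2`.
  have hX : ζ * G₂ * (jacobiSum (χ ^ 3) (χ ^ 3) - jacobiSum χ χ) =
      2 * (1 - χ (-1) * Fintype.card F) := by
    apply mul_left_cancel₀ h2
    linear_combination 2 * ζ * h33 - 2 * ζ * h11 + ((1 - ζ) * G₁ + (1 + ζ) * G₃ + 2) * h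
      - 4 * h13 - (G₁ - G₃) ^ 2 * hζ
  calc (Fintype.card F : K) * (ζ * (jacobiSum (χ ^ 3) (χ ^ 3) - jacobiSum χ χ) / 2) ^ 2
      = (ζ * G₂ * (jacobiSum (χ ^ 3) (χ ^ 3) - jacobiSum χ χ) / 2) ^ 2 := by
        rw [← gaussSum_sq_of_orderOf_eq_four hχ hψ]
        ring
    _ = (1 - χ (-1) * Fintype.card F) ^ 2 := by
        rw [hX]
        field_simp

end GaussSum

section FiniteField

variable {F : Type*} [Field F] [Fintype F] {α : F} (hα : orderOf α = Fintype.card F - 1)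
include hα

lemma isUnit_of_orderOf_eq_card_sub_one : IsUnit α := by
  apply IsOfFinOrder.isUnit
  rw [← orderOf_pos_iff, hα]
  have := Fintype.one_lt_card (α := F)
  omega

lemma mem_zpowers_of_orderOf_eq_card_sub_one (x : Fˣ) :
    x ∈ Subgroup.zpowers (isUnit_of_orderOf_eq_card_sub_one hα).unit := by
  classical
  rw [Subgroup.eq_top_of_card_eq (Subgroup.zpowers _) ?_]
  · exact Subgroup.mem_top x
  rw [Nat.card_zpowers, ← orderOf_units, IsUnit.unit_spec, hα, Nat.card_eq_fintype_card,
    Fintype.card_units]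

lemma exists_pow_eq_of_orderOf_eq_card_sub_one {x : F} (hx : x ≠ 0) : ∃ m : ℕ, α ^ m = x := by
  obtain ⟨m, hm⟩ := mem_powers_iff_mem_zpowers.mpr
    (mem_zpowers_of_orderOf_eq_card_sub_one hα (Units.mk0 x hx))
  exact ⟨m, by simpa using congrArg Units.val hm⟩

variable (h4 : 4 ∣ Fintype.card F - 1)

/-- The quartic character with `χ α = i`; the cyclotomic class `D_j` of order 4 is the set where
it takes the value `i ^ j`. -/
noncomputable def quarticChar : MulChar F ℤ[i] :=
  MulChar.ofUnitHom <| monoidHomOfForallMemZpowers (mem_zpowers_of_orderOf_eq_card_sub_one hα)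
    (g' := (GaussianInt.isPrimitiveRoot_sqrtd.isUnit (by norm_num)).unit) <| by
      rw [← orderOf_units, IsUnit.unit_spec, ← orderOf_units, IsUnit.unit_spec, hα,
        GaussianInt.isPrimitiveRoot_sqrtd.eq_orderOf.symm]
      exact h4

lemma quarticChar_pow (m : ℕ) : quarticChar hα h4 (α ^ m) = Zsqrtd.sqrtd ^ m := by
  rw [show α ^ m = (((isUnit_of_orderOf_eq_card_sub_one hα).unit ^ m : Fˣ) : F) by simp,
    quarticChar, MulChar.ofUnitHom_coe, map_pow, monoidHomOfForallMemZpowers_apply_gen]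
  simp

lemma quarticChar_apply_self : quarticChar hα h4 α = Zsqrtd.sqrtd := by
  simpa using quarticChar_pow hα h4 1

lemma exists_quarticChar_units_eq_pow (a : Fˣ) :
    ∃ m : ℕ, quarticChar hα h4 a = Zsqrtd.sqrtd ^ m := by
  obtain ⟨m, hm⟩ := exists_pow_eq_of_orderOf_eq_card_sub_one hα a.ne_zero
  exact ⟨m, hm ▸ quarticChar_pow hα h4 m⟩

lemma quarticChar_pow_four : quarticChar hα h4 ^ 4 = 1 := by
  refine MulChar.ext fun a ↦ ?_
  obtain ⟨m, hm⟩ := exists_quarticChar_units_eq_pow hα h4 a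
  rw [MulChar.pow_apply_coe, hm, MulChar.one_apply_coe, ← pow_mul, mul_comm, pow_mul,
    GaussianInt.sqrtd_pow_four, one_pow]

lemma orderOf_quarticChar : orderOf (quarticChar hα h4) = 4 := by
  refine orderOf_eq_prime_pow (p := 2) (n := 1) ?_ (quarticChar_pow_four hα h4)
  rw [MulChar.eq_one_iff]
  push Not
  refine ⟨(isUnit_of_orderOf_eq_card_sub_one hα).unit, ?_⟩
  rw [MulChar.pow_apply_coe, IsUnit.unit_spec, quarticChar_apply_self]
  decide

lemma exists_quarticChar_neg_one_eq :
    ∃ ε : ℤ, (ε = 1 ∨ ε = -1) ∧ quarticChar hα h4 (-1) = ε := by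
  have h : quarticChar hα h4 (-1) * quarticChar hα h4 (-1) = 1 := by
    rw [← map_mul, neg_one_mul, neg_neg, map_one]
  rcases mul_self_eq_one_iff.mp h with h | h
  exacts [⟨1, by simp, by simp [h]⟩, ⟨-1, by simp, by simp [h]⟩]

lemma ringHomComp_star_quarticChar :
    (quarticChar hα h4).ringHomComp (starRingEnd ℤ[i]) = quarticChar hα h4 ^ 3 := by
  refine MulChar.ext fun a ↦ ?_
  obtain ⟨m, hm⟩ := exists_quarticChar_units_eq_pow hα h4 a
  rw [MulChar.ringHomComp_apply, MulChar.pow_apply_coe, hm, map_pow, ← pow_mul, mul_comm,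
    pow_mul, show starRingEnd ℤ[i] Zsqrtd.sqrtd = Zsqrtd.sqrtd ^ 3 by decide]

lemma jacobiSum_quarticChar_conj :
    jacobiSum (quarticChar hα h4 ^ 3) (quarticChar hα h4 ^ 3) =
      star (jacobiSum (quarticChar hα h4) (quarticChar hα h4)) := by
  rw [← ringHomComp_star_quarticChar, jacobiSum_ringHomComp]
  rfl

lemma even_im_jacobiSum_quarticChar :
    Even (jacobiSum (quarticChar hα h4) (quarticChar hα h4)).im := by
  -- `J = -1 + z (i - 1) ^ 2 = -1 - 2 i z`
  obtain ⟨z, -, hz⟩ := exists_jacobiSum_eq_neg_one_add (by norm_num)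
    (quarticChar_pow_four hα h4) (quarticChar_pow_four hα h4) h4
    GaussianInt.isPrimitiveRoot_sqrtd
  refine ⟨-z.re, ?_⟩
  rw [hz]
  simp [sq]
  ring

lemma quarticChar_inv : (quarticChar hα h4)⁻¹ = quarticChar hα h4 ^ 3 :=
  inv_eq_of_mul_eq_one_right <| by rw [← pow_succ', quarticChar_pow_four]

lemma norm_jacobiSum_quarticChar :
    (jacobiSum (quarticChar hα h4) (quarticChar hα h4)).norm = Fintype.card F := by
  -- Mathlib's `J(χ, φ) J(χ⁻¹, φ⁻¹) = #F` needs values in a field: compute in `ℂ`.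
  set χ := quarticChar hα h4
  set χC := χ.ringHomComp GaussianInt.toComplex
  have hχC : χC ≠ 1 := (MulChar.ringHomComp_ne_one_iff GaussianInt.toComplex_injective).mpr
    fun h ↦ by simpa [χ, h] using orderOf_quarticChar hα h4
  have hχC2 : χC * χC ≠ 1 := by
    rw [← MulChar.ringHomComp_mul, MulChar.ringHomComp_ne_one_iff GaussianInt.toComplex_injective,
      ← sq]
    exact pow_ne_one_of_lt_orderOf (by norm_num) (by rw [orderOf_quarticChar]; norm_num)
  have h := jacobiSum_mul_jacobiSum_inv
    (by simpa only [ringChar.eq_zero] using (CharP.ringChar_ne_zero_of_finite F).symm)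
    hχC hχC hχC2
  rw [MulChar.ringHomComp_inv, jacobiSum_ringHomComp, jacobiSum_ringHomComp, ← map_mul,
    quarticChar_inv, jacobiSum_quarticChar_conj, ← Zsqrtd.norm_eq_mul_conj, map_intCast] at h
  exact_mod_cast h

lemma orderOf_ringHomComp_quarticChar {K : Type*} [Field K] (h2 : (2 : K) ≠ 0)
    (f : ℤ[i] →+* K) :
    orderOf ((quarticChar hα h4).ringHomComp f) = 4 := by
  refine orderOf_eq_prime_pow (p := 2) (n := 1) ?_ ?_
  · rw [MulChar.eq_one_iff]
    push Not
    refine ⟨(isUnit_of_orderOf_eq_card_sub_one hα).unit, ?_⟩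
    rw [MulChar.pow_apply_coe, IsUnit.unit_spec, MulChar.ringHomComp_apply,
      quarticChar_apply_self, ← map_pow, show (Zsqrtd.sqrtd : ℤ[i]) ^ 2 ^ 1 = -1 by decide,
      map_neg, map_one]
    intro h'
    exact h2 (by linear_combination -h')
  · rw [MulChar.ringHomComp_pow, show 2 ^ (1 + 1) = 4 by rfl, quarticChar_pow_four,
      MulChar.ringHomComp_one]

end FiniteField

namespace DingHellesethLam

section Sequence

variable {F : Type*} [Field F] [Fintype F] {α : F} (hα : orderOf α = Fintype.card F - 1)
  (h4 : 4 ∣ Fintype.card F - 1) (s : F → ℤ) (hbin : ∀ x, s x = 0 ∨ s x = 1)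
  (hs : ∀ x, s x = 1 ↔ ∃ k : ℕ, x = α ^ (4 * k) ∨ x = α ^ (1 + 4 * k))
include hα hbin hs

omit h4 in
lemma apply_zero_eq_zero : s 0 = 0 := by
  refine (hbin 0).resolve_right fun h ↦ ?_
  obtain ⟨k, hk | hk⟩ := (hs 0).mp h <;>
    exact pow_ne_zero _ (isUnit_of_orderOf_eq_card_sub_one hα).ne_zero hk.symm

include h4 in
lemma apply_pow_eq (m : ℕ) : s (α ^ m) = if m % 4 < 2 then 1 else 0 := by
  have hiff := exists_pow_four_mul_iff (isUnit_of_orderOf_eq_card_sub_one hα).isOfFinOrder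
    (hα ▸ h4) m
  split_ifs with hm
  · exact (hs _).mpr (hiff.mpr hm)
  · exact (hbin _).resolve_right fun h ↦ hm (hiff.mp ((hs _).mp h))

-- The indicator of `D₀ ∪ D₁` expanded in the characters `1, χ, χ³`, corrected at `0`.
lemma four_mul_add_ite_eq_quarticChar [DecidableEq F] (x : F) :
    (4 * s x + 2 * (if x = 0 then 1 else 0) : ℤ[i]) =
      2 + (1 - Zsqrtd.sqrtd) * quarticChar hα h4 x +
        (1 + Zsqrtd.sqrtd) * (quarticChar hα h4 ^ 3) x := by
  rw [MulChar.pow_apply' _ (by norm_num)]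
  by_cases hx : x = 0
  · simp [hx, apply_zero_eq_zero hα s hbin hs, MulChar.map_zero]
  obtain ⟨m, rfl⟩ := exists_pow_eq_of_orderOf_eq_card_sub_one hα hx
  rw [if_neg hx, apply_pow_eq hα h4 s hbin hs, quarticChar_pow, GaussianInt.sqrtd_pow_mod_four]
  have : m % 4 < 4 := Nat.mod_lt _ (by norm_num)
  interval_cases m % 4 <;> decide

lemma gaussSum_combination_eq_two {K : Type*} [Field K] (f : ℤ[i] →+* K) {ψ : AddChar F K}
    (hψ : ψ ≠ 1) (hsum : ∑ x, (s x : K) * ψ x = 0) :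
    (1 - f Zsqrtd.sqrtd) * gaussSum ((quarticChar hα h4).ringHomComp f) ψ +
      (1 + f Zsqrtd.sqrtd) * gaussSum ((quarticChar hα h4).ringHomComp f ^ 3) ψ = 2 := by
  classical
  have hpt (x : F) : 4 * ((s x : K) * ψ x) + 2 * (if x = 0 then ψ x else 0) =
      2 * ψ x + (1 - f Zsqrtd.sqrtd) * ((quarticChar hα h4).ringHomComp f x * ψ x) +
        (1 + f Zsqrtd.sqrtd) * (((quarticChar hα h4).ringHomComp f ^ 3) x * ψ x) := by
    have h := congrArg f (four_mul_add_ite_eq_quarticChar hα h4 s hbin hs x)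
    rw [MulChar.ringHomComp_pow, MulChar.ringHomComp_apply, MulChar.ringHomComp_apply]
    split_ifs at h ⊢ <;> simp only [map_add, map_mul, map_sub, map_one, map_ofNat, map_intCast,
      mul_one, mul_zero, add_zero] at h <;> linear_combination ψ x * h
  have h := Finset.sum_congr rfl fun x (_ : x ∈ univ) ↦ hpt x
  simp only [sum_add_distrib, ← mul_sum, hsum, sum_ite_eq', mem_univ, if_true,
    AddChar.map_zero_eq_one, AddChar.sum_eq_zero_of_ne_one hψ] at h
  rw [gaussSum, gaussSum]
  linear_combination -h

end Sequence

section ZMod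

variable {p : ℕ} [Fact p.Prime] {α : ZMod p} (hα : orderOf α = Fintype.card (ZMod p) - 1)
  (h4 : 4 ∣ Fintype.card (ZMod p) - 1) (s : ZMod p → ℤ) (hbin : ∀ x, s x = 0 ∨ s x = 1)
  (hs : ∀ x, s x = 1 ↔ ∃ k : ℕ, x = α ^ (4 * k) ∨ x = α ^ (1 + 4 * k))
include hbin hs

lemma intCast_sq_sub_eq_zero_of_sum_eq_zero {K : Type*} [Field K] (h2 : (2 : K) ≠ 0) {ζ θ : K}
    (hζ : ζ ^ 2 = -1) (hθ : θ ^ p = 1) (hθ1 : θ ≠ 1)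
    (hsum : ∑ i ∈ range p, (s i : K) * θ ^ i = 0) {ε : ℤ} (hε : quarticChar hα h4 (-1) = ε) :
    (((1 - ε * p) ^ 2 - p * (jacobiSum (quarticChar hα h4) (quarticChar hα h4)).im ^ 2 : ℤ) : K)
      = 0 := by
  set χ := quarticChar hα h4
  set J := jacobiSum χ χ
  let f : ℤ[i] →+* K := Zsqrtd.lift ⟨ζ, by push_cast; linear_combination hζ⟩
  have hf (z : ℤ[i]) : f z = z.re + z.im * ζ := Zsqrtd.lift_apply_apply _ _
  let ψ := AddChar.zmodChar p hθ
  have hψ : ψ ≠ 1 := by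
    rwa [AddChar.zmod_char_ne_one_iff, AddChar.zmodChar_apply, ZMod.val_one, pow_one]
  have hsum' : ∑ x, (s x : K) * ψ x = 0 := by
    rw [← hsum, ← ZMod.sum_range_natCast]
    simp [ψ, AddChar.zmodChar_apply']
  have hrel := gaussSum_combination_eq_two hα h4 s hbin hs f hψ hsum'
  have h := card_mul_sq_eq_of_gaussSum_combination h2
    (orderOf_ringHomComp_quarticChar hα h4 h2 f) (AddChar.IsPrimitive.of_ne_one hψ)
    (by simpa [hf] using hζ) hrel
  have hJ : f Zsqrtd.sqrtd * (f (star J) - f J) / 2 = J.im := by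
    simp only [hf, Zsqrtd.re_star, Zsqrtd.im_star, Zsqrtd.re_sqrtd, Zsqrtd.im_sqrtd,
      Int.cast_neg, Int.cast_zero, Int.cast_one]
    field_simp
    linear_combination (-2 * (J.im : K)) * hζ
  rw [MulChar.ringHomComp_pow, jacobiSum_ringHomComp, jacobiSum_ringHomComp,
    jacobiSum_quarticChar_conj, hJ, MulChar.ringHomComp_apply, hε, map_intCast, ZMod.card] at h
  push_cast
  linear_combination -h

lemma dvd_sq_sub_of_dvd_sum {q : ℕ} [Fact q.Prime] (hqM : (q : ℤ) ∣ 2 ^ p - 1)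
    (hqS : (q : ℤ) ∣ ∑ i ∈ range p, s i * 2 ^ i) {ε : ℤ} (hε : quarticChar hα h4 (-1) = ε) :
    (q : ℤ) ∣
      (1 - ε * p) ^ 2 - p * (jacobiSum (quarticChar hα h4) (quarticChar hα h4)).im ^ 2 := by
  let K := AlgebraicClosure (ZMod q)
  obtain ⟨ζ, hζ⟩ := IsAlgClosed.exists_pow_nat_eq (-1 : K) two_pos
  have h2p : (2 : K) ^ p = 1 := by
    have h := (CharP.intCast_eq_zero_iff K q _).mpr hqM
    push_cast at h
    linear_combination h
  have h2 : (2 : K) ≠ 0 := fun h ↦ by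
    simp [h, (Fact.out : p.Prime).ne_zero] at h2p
  refine (CharP.intCast_eq_zero_iff K q _).mp <|
    intCast_sq_sub_eq_zero_of_sum_eq_zero hα h4 s hbin hs h2 hζ h2p (fun h ↦ ?_) ?_ hε
  · exact one_ne_zero (by linear_combination h : (1 : K) = 0)
  · have h := (CharP.intCast_eq_zero_iff K q _).mpr hqS
    rw [@Int.cast_sum K] at h
    simpa using h

end ZMod

end DingHellesethLam

lemma mod_eq_one_of_dvd_two_pow_sub_one {p q : ℕ} [Fact p.Prime] [Fact q.Prime]
    (h : (q : ℤ) ∣ 2 ^ p - 1) : q % p = 1 := by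
  have h2 : (2 : ZMod q) ^ p = 1 := by
    have h' := (ZMod.intCast_zmod_eq_zero_iff_dvd _ q).mpr h
    push_cast at h'
    linear_combination h'
  have h20 : (2 : ZMod q) ≠ 0 := fun h0 ↦ by
    simp [h0, (Fact.out : p.Prime).ne_zero] at h2
  have h21 : (2 : ZMod q) ≠ 1 :=
    fun h1 ↦ one_ne_zero (by linear_combination h1 : (1 : ZMod q) = 0)
  have hdvd := ZMod.orderOf_dvd_card_sub_one h20
  rw [orderOf_eq_prime h2 h21] at hdvd
  have hmod := (Nat.modEq_iff_dvd' (Fact.out : q.Prime).one_le).mpr hdvd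
  rw [Nat.ModEq, Nat.mod_eq_of_lt (Fact.out : p.Prime).one_lt] at hmod
  exact hmod.symm

lemma Nat.Prime.odd_of_dvd_two_pow_sub_one {p q : ℕ} (hp : p ≠ 0) (hq : q.Prime)
    (h : (q : ℤ) ∣ 2 ^ p - 1) : Odd q := by
  refine hq.odd_of_ne_two fun hq2 ↦ ?_
  rw [hq2, Nat.cast_ofNat, ← even_iff_two_dvd, Int.even_sub_one, Int.even_pow] at h
  exact h ⟨even_two, hp⟩

lemma not_dvd_one_add_mul {p q : ℕ} (hp : Odd p) (hq : Odd q) (hq1 : 1 < q) (hqp : q % p = 1)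
    {t : ℤ} (ht : Odd t) (ht_ge : -2 ≤ t) (ht_le : t ≤ p + 2) : ¬ (q : ℤ) ∣ 1 + p * t := by
  -- From `q c = 1 + p t` and `q ≡ 1` we get `c ≡ 1 (mod p)`; `c = 1` fails by parity, and
  -- `|c - 1| ≥ p` is too large because `q ≥ 2 p + 1`.
  rintro ⟨c, hc⟩
  obtain ⟨d, hd⟩ : ∃ d : ℕ, q = p * d + 1 := ⟨q / p, by have := Nat.div_add_mod q p; omega⟩
  have hp3 : 3 ≤ p := by
    have hp1 : p ≠ 1 := by
      rintro rfl
      rw [Nat.mod_one] at hqp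
      exact zero_ne_one hqp
    obtain ⟨a, rfl⟩ := hp
    omega
  have hd2 : 2 ≤ d := by
    obtain ⟨a, rfl⟩ := hp
    obtain ⟨b, rfl⟩ := hq
    by_contra! h
    interval_cases d <;> omega
  have hq' : (q : ℤ) = p * d + 1 := by exact_mod_cast hd
  have hp3' : (3 : ℤ) ≤ p := by exact_mod_cast hp3
  have hq2p : 2 * (p : ℤ) + 1 ≤ q := by
    rw [hq']
    nlinarith [(by exact_mod_cast hd2 : (2 : ℤ) ≤ d)]
  obtain ⟨k, hk⟩ : (p : ℤ) ∣ c - 1 := ⟨t - d * c, by linear_combination -hc - c * hq'⟩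
  rcases lt_trichotomy k 0 with hk0 | rfl | hk0
  · have hc' : c ≤ 1 - p := by nlinarith
    nlinarith [
      mul_nonneg (by linarith : (0 : ℤ) ≤ q - 2 * p - 1) (by linarith : (0 : ℤ) ≤ p - 1),
      mul_nonneg (by linarith : (0 : ℤ) ≤ q) (by linarith : (0 : ℤ) ≤ 1 - p - c),
      mul_nonneg (by linarith : (0 : ℤ) ≤ p) (by linarith : (0 : ℤ) ≤ t + 2)]
  · rw [mul_zero, sub_eq_zero] at hk
    subst hk
    have hodd : Odd ((q : ℤ) - p * t) := by
      rw [show (q : ℤ) - p * t = 1 by linarith]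
      exact odd_one
    exact Int.not_odd_iff_even.mpr (hq.natCast.sub_odd (hp.natCast.mul ht)) hodd
  · have hc' : 1 + p ≤ c := by nlinarith
    nlinarith [
      mul_nonneg (by linarith : (0 : ℤ) ≤ q - 2 * p - 1) (by linarith : (0 : ℤ) ≤ p + 1),
      mul_nonneg (by linarith : (0 : ℤ) ≤ q) (by linarith : (0 : ℤ) ≤ c - 1 - p),
      mul_nonneg (by linarith : (0 : ℤ) ≤ p) (by linarith : (0 : ℤ) ≤ p + 2 - t)]

lemma not_dvd_sq_sub_mul_sq {p q : ℕ} (hp : Odd p) (hq : Odd q) (hq1 : 1 < q) (hqp : q % p = 1)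
    {a b ε : ℤ} (hab : a ^ 2 + b ^ 2 = p) (hb : Even b) (hε : ε = 1 ∨ ε = -1) :
    ¬ (q : ℤ) ∣ (1 - ε * p) ^ 2 - p * b ^ 2 := by
  have hε2 : ε ^ 2 = 1 := by rcases hε with rfl | rfl <;> norm_num
  rw [show (1 - ε * p) ^ 2 - p * b ^ 2 = 1 + p * (a ^ 2 - 2 * ε) by
    linear_combination (p : ℤ) ^ 2 * hε2 - (p : ℤ) * hab]
  obtain ⟨c, rfl⟩ := hb
  refine not_dvd_one_add_mul hp hq hq1 hqp ?_ ?_ ?_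
  · rw [show a ^ 2 - 2 * ε = p - 2 * (2 * c ^ 2 + ε) by linear_combination hab]
    exact hp.natCast.sub_even (even_two_mul _)
  · rcases hε with rfl | rfl <;> nlinarith [sq_nonneg a]
  · rcases hε with rfl | rfl <;> nlinarith [sq_nonneg c]

theorem stmt15_general (p : ℕ) (hp : p.Prime) (hp4 : p % 4 = 1)
    (α : ZMod p) (hα : orderOf α = p - 1)
    (s : ZMod p → ℤ) (hbin : ∀ i, s i = 0 ∨ s i = 1)
    (hs : ∀ x : ZMod p, s x = 1 ↔ ∃ k : ℕ, x = α ^ (4 * k) ∨ x = α ^ (1 + 4 * k)) :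
    Int.gcd (∑ i ∈ Finset.range p, s (i : ZMod p) * 2 ^ i) (2 ^ p - 1) = 1 := by
  have := Fact.mk hp
  by_contra hne
  obtain ⟨q, hq, hqd⟩ := Nat.exists_prime_and_dvd hne
  have := Fact.mk hq
  have hqS := (Int.natCast_dvd_natCast.mpr hqd).trans (Int.gcd_dvd_left _ _)
  have hqM := (Int.natCast_dvd_natCast.mpr hqd).trans (Int.gcd_dvd_right _ _)
  have hα' : orderOf α = Fintype.card (ZMod p) - 1 := by rwa [ZMod.card]
  have h4 : 4 ∣ Fintype.card (ZMod p) - 1 := by rw [ZMod.card]; omega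
  obtain ⟨ε, hε, hχε⟩ := exists_quarticChar_neg_one_eq hα' h4
  have hnorm := norm_jacobiSum_quarticChar hα' h4
  rw [Zsqrtd.norm_def, ZMod.card] at hnorm
  exact not_dvd_sq_sub_mul_sq (hp.odd_of_ne_two (by omega)) (hq.odd_of_dvd_two_pow_sub_one
    hp.ne_zero hqM) hq.one_lt (mod_eq_one_of_dvd_two_pow_sub_one hqM)
    (a := (jacobiSum (quarticChar hα' h4) (quarticChar hα' h4)).re) (by linear_combination hnorm)
    (even_im_jacobiSum_quarticChar hα' h4) hε
    (DingHellesethLam.dvd_sq_sub_of_dvd_sum hα' h4 s hbin hs hqM hqS hχε)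

theorem stmt15 (p : ℕ) (hp : p.Prime) (hp4 : p % 4 = 1) [NeZero p]
    (α : ZMod p) (hα : orderOf α = p - 1)
    (s : ZMod p → ℤ) (hbin : ∀ i, s i = 0 ∨ s i = 1)
    (hs : ∀ x : ZMod p, s x = 1 ↔ ∃ k : ℕ, x = α ^ (4 * k) ∨ x = α ^ (1 + 4 * k)) :
    Int.gcd (∑ i ∈ Finset.range p, s (i : ZMod p) * 2 ^ i) (2 ^ p - 1) = 1 :=
  stmt15_general p hp hp4 α hα s hbin hs
end

section
/- Let s be a binary sequence of period N, let g(x) = gcd(P_s(x), 1-x^N) taken monic in Q[x] (so g ∈ Z[x]), and suppose u(x)P_s(x) + v(x)(1-x^N) = a·g(x) with u, v ∈ Z[x] and nonzero integer a. Let p be a prime. Then the linear complexity of s over F_p satisfies LC_p(s) ≤ N - deg(g), with equality if p does not divide a. -/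
open Polynomial

theorem stmt17 (N : ℕ) [NeZero N] (s : ZMod N → ℤ) (hbin : ∀ i, s i = 0 ∨ s i = 1)
    (g u v : ℤ[X]) (a : ℤ) (ha : a ≠ 0) (hmonic : g.Monic)
    (hgcd : Associated (g.map (Int.castRingHom ℚ))
      (EuclideanDomain.gcd
        ((∑ i ∈ Finset.range N, C (s (i : ZMod N)) * X ^ i).map (Int.castRingHom ℚ))
        (((1 : ℤ[X]) - X ^ N).map (Int.castRingHom ℚ))))
    (hbez : u * (∑ i ∈ Finset.range N, C (s (i : ZMod N)) * X ^ i) + v * (1 - X ^ N) =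
      C a * g)
    (p : ℕ) [Fact p.Prime] :
    N - (EuclideanDomain.gcd
        (∑ i ∈ Finset.range N, C ((s (i : ZMod N) : ZMod p)) * X ^ i)
        (1 - X ^ N)).natDegree ≤ N - g.natDegree ∧
    (¬ (p : ℤ) ∣ a →
      N - (EuclideanDomain.gcd
        (∑ i ∈ Finset.range N, C ((s (i : ZMod N) : ZMod p)) * X ^ i)
        (1 - X ^ N)).natDegree = N - g.natDegree) := by
  set P : ℤ[X] := ∑ i ∈ Finset.range N, C (s (i : ZMod N)) * X ^ i with hP
  set Pp : (ZMod p)[X] := ∑ i ∈ Finset.range N, C ((s (i : ZMod N) : ZMod p)) * X ^ i with hPp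
  set G : (ZMod p)[X] := EuclideanDomain.gcd Pp (1 - X ^ N) with hG
  have hmapP : P.map (Int.castRingHom (ZMod p)) = Pp := by
    simp [hP, hPp, Polynomial.map_sum]
  have hmapQ : ((1 : ℤ[X]) - X ^ N).map (Int.castRingHom (ZMod p)) = 1 - X ^ N := by
    simp
  -- g divides P and 1 - X^N over ℤ
  have hgP : g ∣ P := by
    rw [← Polynomial.map_dvd_map (Int.castRingHom ℚ) Int.cast_injective hmonic]
    exact hgcd.dvd.trans (EuclideanDomain.gcd_dvd_left _ _)
  have hgQ : g ∣ (1 : ℤ[X]) - X ^ N := by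
    rw [← Polynomial.map_dvd_map (Int.castRingHom ℚ) Int.cast_injective hmonic]
    exact hgcd.dvd.trans (EuclideanDomain.gcd_dvd_right _ _)
  -- reductions mod p
  have hgPp : g.map (Int.castRingHom (ZMod p)) ∣ Pp := by
    rw [← hmapP]; exact Polynomial.map_dvd _ hgP
  have hgQp : g.map (Int.castRingHom (ZMod p)) ∣ (1 - X ^ N : (ZMod p)[X]) := by
    rw [← hmapQ]; exact Polynomial.map_dvd _ hgQ
  have hgG : g.map (Int.castRingHom (ZMod p)) ∣ G :=
    EuclideanDomain.dvd_gcd hgPp hgQp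
  have hQne : (1 - X ^ N : (ZMod p)[X]) ≠ 0 := by
    intro h
    have := congrArg (fun q => Polynomial.coeff q N) h
    simp [Polynomial.coeff_one, NeZero.ne N] at this
  have hGne : G ≠ 0 := by
    rw [hG, Ne, EuclideanDomain.gcd_eq_zero_iff]
    exact fun h => hQne h.2
  have hgmapmonic : (g.map (Int.castRingHom (ZMod p))).Monic := hmonic.map _
  have hdegmap' : (g.map (Int.castRingHom (ZMod p))).natDegree = g.natDegree :=
    hmonic.natDegree_map _
  have h1 : g.natDegree ≤ G.natDegree := by
    rw [← hdegmap']
    exact Polynomial.natDegree_le_of_dvd hgG hGne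
  refine ⟨Nat.sub_le_sub_left h1 N, fun hpa => ?_⟩
  -- Bezout mod p
  have hbezp := congrArg (Polynomial.map (Int.castRingHom (ZMod p))) hbez
  rw [Polynomial.map_add, Polynomial.map_mul, Polynomial.map_mul, hmapP, hmapQ,
    Polynomial.map_mul, Polynomial.map_C] at hbezp
  have hGdvd : G ∣ C ((a : ZMod p)) * g.map (Int.castRingHom (ZMod p)) := by
    have : (Int.castRingHom (ZMod p)) a = ((a : ZMod p)) := rfl
    rw [this] at hbezp
    rw [← hbezp]
    exact dvd_add (Dvd.dvd.mul_left (EuclideanDomain.gcd_dvd_left _ _) _)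
      (Dvd.dvd.mul_left (EuclideanDomain.gcd_dvd_right _ _) _)
  have hane : ((a : ZMod p)) ≠ 0 := by
    rwa [Ne, ZMod.intCast_zmod_eq_zero_iff_dvd]
  have hCunit : IsUnit (C ((a : ZMod p))) :=
    Polynomial.isUnit_C.mpr (isUnit_iff_ne_zero.mpr hane)
  have hGdvd' : G ∣ g.map (Int.castRingHom (ZMod p)) :=
    (hCunit.dvd_mul_left).mp hGdvd
  have h2 : G.natDegree ≤ g.natDegree := by
    rw [← hdegmap']
    exact Polynomial.natDegree_le_of_dvd hGdvd' hgmapmonic.ne_zero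
  rw [le_antisymm h1 h2]
end

section
/- Let s be a binary sequence of period N whose support set D_s has size (N-1)/2 and whose complement support is an (N, (N+1)/2, (N+1)/4) cyclic difference set. Let p be an odd prime. If p ∤ (N+1) and p | (N-1), then LC_p(s) = N - 1; if p ∤ (N^2 - 1), then LC_p(s) = N. -/
/-
Write `Q(x) = ∑_{i ∈ D} xⁱ` for the zero set `D` of `s`. At an `N`-th root of unity `β ≠ 1`
the powers of `β` sum to zero, so `P(β) = -Q(β)`, while the difference-set property gives
`Q(β) Q(β⁻¹) = k - λ = (N + 1) / 4`, which is nonzero in characteristic `p ∤ N + 1`. Hence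
the only possible common root of `P` and `1 - X ^ N` over the algebraic closure of `𝔽_p` is
`1`. It is a root of `P` iff `p ∣ (N - 1) / 2`, and then a simple root of `1 - X ^ N` because
`N ≡ 1 mod p`.
-/

open Polynomial Finset

lemma ZMod.sum_eq_sum_range {M : Type*} [AddCommMonoid M] {N : ℕ} [NeZero N] (f : ZMod N → M) :
    ∑ τ, f τ = ∑ i ∈ range N, f i :=
  sum_nbij' ZMod.val Nat.cast (fun τ _ => by simpa using ZMod.val_lt τ) (by simp) (by simp)
    (fun i hi => by simpa using Nat.mod_eq_of_lt (mem_range.1 hi)) (by simp)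

section DifferenceSet

variable {G R : Type*} [AddCommGroup G] [DecidableEq G]

-- Every nonzero `τ` arises as a difference `i - j` of elements of `D` in exactly `l` ways.
def IsDifferenceSet (D : Finset G) (l : ℕ) : Prop :=
  ∀ τ : G, τ ≠ 0 → #(D ∩ D.image (· + τ)) = l

lemma card_filter_sub_eq_card_inter_image (D : Finset G) (τ : G) :
    #((D ×ˢ D).filter fun x => x.1 - x.2 = τ) = #(D ∩ D.image (· + τ)) := by
  refine card_nbij' Prod.fst (fun i => (i, i - τ)) ?_ ?_ ?_ ?_
  · rintro ⟨i, j⟩ hx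
    simp only [coe_filter, mem_product, Set.mem_ofPred_eq] at hx
    simp only [coe_inter, coe_image, Set.mem_inter_iff, mem_coe, Set.mem_image]
    exact ⟨hx.1.1, j, hx.1.2, by rw [← hx.2]; abel⟩
  · intro i hi
    simp only [coe_inter, coe_image, Set.mem_inter_iff, mem_coe, Set.mem_image] at hi
    obtain ⟨hi, j, hj, rfl⟩ := hi
    simpa using ⟨hi, hj⟩
  · rintro ⟨i, j⟩ hx
    simp only [coe_filter, mem_product, Set.mem_ofPred_eq] at hx
    simp [← hx.2]
  · intro i _
    rfl

variable [Fintype G] [CommRing R]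

lemma AddChar.sum_mul_sum_neg_eq_sum_card_inter (ψ : AddChar G R) (D : Finset G) :
    (∑ i ∈ D, ψ i) * ∑ j ∈ D, ψ (-j) = ∑ τ, (#(D ∩ D.image (· + τ)) : R) * ψ τ := by
  calc (∑ i ∈ D, ψ i) * ∑ j ∈ D, ψ (-j) = ∑ x ∈ D ×ˢ D, ψ (x.1 - x.2) := by
        simp only [sum_mul_sum, sum_product, sub_eq_add_neg, AddChar.map_add_eq_mul]
    _ = ∑ τ, ∑ x ∈ (D ×ˢ D).filter (fun x => x.1 - x.2 = τ), ψ (x.1 - x.2) :=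
        (sum_fiberwise _ _ _).symm
    _ = ∑ τ, (#(D ∩ D.image (· + τ)) : R) * ψ τ := by
        refine sum_congr rfl fun τ _ => ?_
        rw [sum_congr rfl fun x hx => congrArg ψ (mem_filter.1 hx).2, sum_const, nsmul_eq_mul,
          card_filter_sub_eq_card_inter_image]

lemma IsDifferenceSet.sum_mul_sum_neg [IsDomain R] {D : Finset G} {l : ℕ}
    (hD : IsDifferenceSet D l) {ψ : AddChar G R} (hψ : ψ ≠ 1) :
    (∑ i ∈ D, ψ i) * ∑ j ∈ D, ψ (-j) = #D - l := by
  have hsum := AddChar.sum_eq_zero_of_ne_one hψ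
  rw [← add_sum_erase _ _ (mem_univ 0), AddChar.map_zero_eq_one] at hsum
  rw [ψ.sum_mul_sum_neg_eq_sum_card_inter, ← add_sum_erase _ _ (mem_univ 0),
    sum_congr rfl fun τ hτ => by rw [hD τ (ne_of_mem_erase hτ)], ← mul_sum]
  simp only [add_zero, image_id', inter_self, AddChar.map_zero_eq_one, mul_one]
  linear_combination (l : R) * hsum

lemma IsDifferenceSet.sum_mul_addChar_ne_zero [IsDomain R] {s : G → ℤ}
    (hs : ∀ i, s i = 0 ∨ s i = 1)
    {l : ℕ} (hD : IsDifferenceSet (univ.filter fun i => s i = 0) l)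
    (hl : (#(univ.filter fun i => s i = 0) : R) - l ≠ 0) {ψ : AddChar G R} (hψ : ψ ≠ 1) :
    ∑ i, (s i : R) * ψ i ≠ 0 := by
  have hcompl : ∑ i, (s i : R) * ψ i = -∑ i ∈ univ.filter (fun i => s i = 0), ψ i := by
    rw [eq_neg_iff_add_eq_zero, sum_filter, ← sum_add_distrib]
    refine (sum_congr rfl fun i _ => ?_).trans (AddChar.sum_eq_zero_of_ne_one hψ)
    rcases hs i with h | h <;> simp [h]
  intro h
  rw [h, zero_eq_neg] at hcompl
  rw [← hD.sum_mul_sum_neg hψ, hcompl, zero_mul] at hl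
  exact hl rfl

end DifferenceSet

lemma EuclideanDomain.gcd_associated_of_isCoprime {R : Type*} [EuclideanDomain R] [DecidableEq R]
    {a b d a' b' : R} (ha : a = d * a') (hb : b = d * b') (h : IsCoprime a' b') :
    Associated (EuclideanDomain.gcd a b) d := by
  obtain ⟨u, v, huv⟩ := h
  refine associated_of_dvd_dvd ?_ (EuclideanDomain.dvd_gcd ⟨a', ha⟩ ⟨b', hb⟩)
  have hd : d = u * a + v * b := by rw [ha, hb]; linear_combination (-d) * huv
  rw [hd]
  exact dvd_add (dvd_mul_of_dvd_right (EuclideanDomain.gcd_dvd_left a b) u)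
    (dvd_mul_of_dvd_right (EuclideanDomain.gcd_dvd_right a b) v)

namespace Polynomial

variable {F : Type*} [Field F] [DecidableEq F] {P : F[X]} {N : ℕ}

lemma natDegree_gcd_one_sub_X_pow_eq_zero (h1 : P.eval 1 ≠ 0)
    (hroots : ∀ a : AlgebraicClosure F, a ^ N = 1 → a ≠ 1 → aeval a P ≠ 0) :
    (EuclideanDomain.gcd P (1 - X ^ N)).natDegree = 0 := by
  have hcop : IsCoprime P (1 - X ^ N) := by
    refine (isCoprime_iff_aeval_ne_zero_of_isAlgClosed _ (AlgebraicClosure F) _ _).2 fun a => ?_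
    by_cases haN : a ^ N = 1
    · left
      rcases eq_or_ne a 1 with rfl | ha1
      · simpa [aeval_def, eval₂_at_one] using h1
      · exact hroots a haN ha1
    · right
      rw [map_sub, map_one, map_pow, aeval_X, Ne, sub_eq_zero, eq_comm]
      exact haN
  rw [natDegree_eq_of_degree_eq (degree_eq_degree_of_associated
    (EuclideanDomain.gcd_associated_of_isCoprime (one_mul P).symm (one_mul _).symm hcop)),
    natDegree_one]

lemma natDegree_gcd_one_sub_X_pow_eq_one (hN : (N : F) ≠ 0) (h1 : P.eval 1 = 0)
    (hroots : ∀ a : AlgebraicClosure F, a ^ N = 1 → a ≠ 1 → aeval a P ≠ 0) :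
    (EuclideanDomain.gcd P (1 - X ^ N)).natDegree = 1 := by
  obtain ⟨Q, hQ⟩ := dvd_iff_isRoot.2 h1
  have hgeom : (1 - X ^ N : F[X]) = (X - C 1) * -∑ i ∈ range N, X ^ i := by
    rw [C_1, mul_neg, mul_geom_sum, neg_sub]
  have hcop : IsCoprime Q (-∑ i ∈ range N, X ^ i) := by
    refine (isCoprime_iff_aeval_ne_zero_of_isAlgClosed _ (AlgebraicClosure F) _ _).2 fun a => ?_
    rw [or_iff_not_imp_right, not_not]
    intro ha
    have haN : a ^ N = 1 := by
      have := congrArg (aeval a) hgeom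
      simp only [map_sub, map_one, map_pow, aeval_X, map_mul, ha, mul_zero] at this
      exact (sub_eq_zero.1 this).symm
    have ha1 : a ≠ 1 := by
      rintro rfl
      simp only [map_neg, map_sum, map_pow, aeval_X, one_pow, sum_const, card_range,
        nsmul_eq_mul, mul_one, neg_eq_zero] at ha
      exact hN (by
        exact_mod_cast (algebraMap F (AlgebraicClosure F)).injective (by simpa using ha))
    intro hQa
    exact hroots a haN ha1 (by rw [hQ, map_mul, hQa, mul_zero])
  rw [natDegree_eq_of_degree_eq (degree_eq_degree_of_associated
    (EuclideanDomain.gcd_associated_of_isCoprime hQ hgeom hcop)), natDegree_X_sub_C]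

end Polynomial

section BinarySequence

variable {N : ℕ} [NeZero N] {s : ZMod N → ℤ}

lemma sum_range_intCast_eq_card (hs : ∀ i, s i = 0 ∨ s i = 1) (R : Type*)
    [AddCommGroupWithOne R] :
    ∑ i ∈ range N, (s i : R) = #(univ.filter fun i => s i = 1) := by
  rw [← ZMod.sum_eq_sum_range (fun i => (s i : R)), card_filter, Nat.cast_sum]
  refine sum_congr rfl fun i _ => ?_
  rcases hs i with h | h <;> simp [h]

lemma sum_range_mul_pow_ne_zero {K : Type*} [Field K] (hN4 : N % 4 = 3)
    (hs : ∀ i, s i = 0 ∨ s i = 1)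
    (hcard : #(univ.filter fun i => s i = 0) = (N + 1) / 2)
    (hdiff : IsDifferenceSet (univ.filter fun i => s i = 0) ((N + 1) / 4))
    (hK : (((N + 1) / 4 : ℕ) : K) ≠ 0) {β : K} (hβ : β ^ N = 1) (hβ1 : β ≠ 1) :
    ∑ i ∈ range N, (s i : K) * β ^ i ≠ 0 := by
  set ψ := AddChar.zmodChar N hβ
  have hψ : ψ ≠ 1 := by
    rw [AddChar.zmod_char_ne_one_iff, ← Nat.cast_one, AddChar.zmodChar_apply', pow_one]
    exact hβ1
  have hl : (#(univ.filter fun i => s i = 0) : K) - ((N + 1) / 4 : ℕ) ≠ 0 := by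
    rwa [hcard, show (N + 1) / 2 = (N + 1) / 4 + (N + 1) / 4 by omega, Nat.cast_add,
      add_sub_cancel_right]
  convert hdiff.sum_mul_addChar_ne_zero hs hl hψ using 1
  rw [ZMod.sum_eq_sum_range]
  refine sum_congr rfl fun i _ => ?_
  rw [AddChar.zmodChar_apply']

end BinarySequence

theorem stmt19 (N : ℕ) [NeZero N] (hN4 : N % 4 = 3) (s : ZMod N → ℤ)
    (hbin : ∀ i, s i = 0 ∨ s i = 1)
    (hcard : (Finset.univ.filter fun i : ZMod N => s i = 1).card = (N - 1) / 2)
    (hcard' : (Finset.univ.filter fun i : ZMod N => s i = 0).card = (N + 1) / 2)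
    (hdiff : ∀ τ : ZMod N, τ ≠ 0 →
      ((Finset.univ.filter fun i : ZMod N => s i = 0) ∩
        ((Finset.univ.filter fun i : ZMod N => s i = 0)).image (· + τ)).card = (N + 1) / 4)
    (p : ℕ) [Fact p.Prime] (hpodd : p ≠ 2) :
    ((¬ p ∣ (N + 1)) → p ∣ (N - 1) →
      N - (EuclideanDomain.gcd
        (∑ i ∈ Finset.range N, C ((s (i : ZMod N) : ZMod p)) * X ^ i)
        (1 - X ^ N)).natDegree = N - 1) ∧
    ((¬ p ∣ (N ^ 2 - 1)) →
      N - (EuclideanDomain.gcd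
        (∑ i ∈ Finset.range N, C ((s (i : ZMod N) : ZMod p)) * X ^ i)
        (1 - X ^ N)).natDegree = N) := by
  set P := ∑ i ∈ range N, C ((s (i : ZMod N) : ZMod p)) * X ^ i
  have hP1 : P.eval 1 = ((N - 1) / 2 : ℕ) := by
    simp only [P, eval_finsetSum, eval_mul, eval_C, eval_pow, eval_X, one_pow, mul_one,
      sum_range_intCast_eq_card hbin, hcard]
  have hroots (hp : ¬ p ∣ N + 1) (a : AlgebraicClosure (ZMod p)) (ha : a ^ N = 1)
      (ha1 : a ≠ 1) : aeval a P ≠ 0 := by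
    have hK : (((N + 1) / 4 : ℕ) : AlgebraicClosure (ZMod p)) ≠ 0 := by
      rw [Ne, CharP.cast_eq_zero_iff _ p]
      exact fun h => hp (h.trans ⟨4, by omega⟩)
    simp only [P, map_sum, map_mul, map_pow, aeval_X, map_intCast]
    exact sum_range_mul_pow_ne_zero hN4 hbin hcard' hdiff hK ha ha1
  refine ⟨fun hp1 hpN => ?_, fun hp => ?_⟩
  · have hp2 : p ∣ (N - 1) / 2 :=
      ((Nat.coprime_primes Fact.out Nat.prime_two).2 hpodd).dvd_of_dvd_mul_left
        (by rwa [show 2 * ((N - 1) / 2) = N - 1 by omega])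
    have hN : (N : ZMod p) ≠ 0 := by
      rw [show N = N - 1 + 1 by omega, Nat.cast_succ, (ZMod.natCast_eq_zero_iff _ p).2 hpN,
        zero_add]
      exact one_ne_zero
    rw [natDegree_gcd_one_sub_X_pow_eq_one hN (by rw [hP1, (ZMod.natCast_eq_zero_iff _ p).2 hp2])
      (hroots hp1)]
  · rw [← one_pow 2, Nat.sq_sub_sq] at hp
    have hP1ne : P.eval 1 ≠ 0 := by
      rw [hP1, Ne, ZMod.natCast_eq_zero_iff]
      exact fun h => hp (Dvd.dvd.mul_left (h.trans ⟨2, by omega⟩) _)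
    rw [natDegree_gcd_one_sub_X_pow_eq_zero hP1ne (hroots fun h => hp (h.mul_right _)),
      Nat.sub_zero]
end
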